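/- arXiv:2204.03395 — 3 statements merged into one kernel-verified Lean document; each statement's English description precedes it below -/
import Mathlib

section
/- Fix N_e, N_p > 0 and R₀ > 0 large enough that W_{R₀} is nonempty. Then there exists a constant k₀ such that for every R ≥ R₀ and every minimizer (ρ_e^R, ρ_p^R) of the energy E over W_R, one has ‖ρ_e^R‖_{L^{4/3}} ≤ k₀ and ‖ρ_p^R‖_{L^{4/3}} ≤ k₀. -/
/-!
Minimality gives `E(ρ) ≤ E(σ)` for one fixed `σ ∈ W_{R₀} ⊆ W_R`, so it suffices to bound the
kinetic energy `∫ ρ_e^{5/3} + ∫ ρ_p^{5/3}` from above in terms of the energy, uniformly in `R`.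
Both Coulomb terms are at most a constant times `N · sup_x ∫ (ρ_e + ρ_p)(y) / |x - y| dy`. Splitting
`1/|x - y|` at `|x - y| = 1` and using Young's inequality with exponents `5/3` and `5/2` near the
diagonal (`|z|^{-5/2}` is integrable near `0` in `ℝ³`), this potential is at most
`ε ∫ (ρ_e^{5/3} + ρ_p^{5/3}) + C_ε + N`; taking `ε` small, the kinetic energy absorbs it.
Finally `ρ^{4/3} ≤ ρ + ρ^{5/3}` turns the bound on `∫ ρ^{5/3}` into one on the `L^{4/3}` norms.
-/

open MeasureTheory Set

noncomputable section

abbrev Sp := EuclideanSpace ℝ (Fin 3)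

/-- Radial symmetry of a density on `ℝ³`. -/
def Radial (ρ : Sp → ℝ) : Prop := ∀ x y : Sp, ‖x‖ = ‖y‖ → ρ x = ρ y

/-- The double integral `∬ f(x) g(y) / |x - y| dx dy`. -/
def dblInt (f g : Sp → ℝ) : ℝ := ∫ x : Sp, ∫ y : Sp, f x * g y / ‖x - y‖

/-- The two-species Thomas–Fermi energy functional with nonrelativistic kinetic energy. -/
def energy (ke kp q G me mp : ℝ) (ρe ρp : Sp → ℝ) : ℝ :=
  ke * (∫ x : Sp, ρe x ^ ((5:ℝ)/3)) + kp * (∫ x : Sp, ρp x ^ ((5:ℝ)/3))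
    + q ^ 2 / 2 * dblInt (fun x => ρp x - ρe x) (fun x => ρp x - ρe x)
    - G / 2 * dblInt (fun x => mp * ρp x + me * ρe x) (fun x => mp * ρp x + me * ρe x)

/-- The set `W_R`: pairs of nonnegative radially symmetric (measurable, integrable)
functions with `∫ρ_e = N_e`, `∫ρ_p = N_p`, vanishing outside the ball of radius `R`
and bounded by `R` almost everywhere. -/
def InWR (Ne Np R : ℝ) (ρe ρp : Sp → ℝ) : Prop :=
  Measurable ρe ∧ Measurable ρp ∧ (∀ x, 0 ≤ ρe x) ∧ (∀ x, 0 ≤ ρp x) ∧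
  Radial ρe ∧ Radial ρp ∧ Integrable ρe ∧ Integrable ρp ∧
  (∫ x : Sp, ρe x) = Ne ∧ (∫ x : Sp, ρp x) = Np ∧
  (∀ x : Sp, R < ‖x‖ → ρe x = 0) ∧ (∀ x : Sp, R < ‖x‖ → ρp x = 0) ∧
  (∀ᵐ x : Sp, ρe x ≤ R) ∧ (∀ᵐ x : Sp, ρp x ≤ R)

namespace RieszKernel

section Pointwise

variable {E : Type*} [NormedAddCommGroup E]

def cutoff (s : ℝ) : E → ℝ := (Metric.ball (0 : E) 1).indicator fun z => ‖z‖ ^ (-s)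

lemma cutoff_nonneg (s : ℝ) (z : E) : 0 ≤ cutoff s z :=
  indicator_nonneg (fun _ _ => by positivity) z

/-- Young's inequality `ab ≤ aᵖ/p + bᵠ/q` with `b = ‖z‖⁻¹` near the origin, and `a/‖z‖ ≤ a` away
from it. -/
lemma div_norm_le_add_cutoff {p q a t : ℝ} (hpq : p.HolderConjugate q) (ha : 0 ≤ a) (ht : 0 < t) (z : E) :
    a / ‖z‖ ≤ t ^ p * a ^ p + (t ^ q)⁻¹ * cutoff q z + a := by
  have hKa : 0 ≤ t ^ p * a ^ p := by positivity
  have hKz : 0 ≤ (t ^ q)⁻¹ * cutoff q z := mul_nonneg (by positivity) (cutoff_nonneg q z)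
  rcases (norm_nonneg z).eq_or_lt with hz | hz
  · rw [← hz, div_zero]
    linarith
  rcases le_or_gt 1 ‖z‖ with h1 | h1
  · linarith [div_le_self ha h1]
  have hyoung := Real.young_inequality_of_nonneg (mul_nonneg ht.le ha)
    (inv_nonneg.2 (mul_nonneg ht.le hz.le)) hpq
  have hp : (t * a) ^ p / p ≤ t ^ p * a ^ p := by
    rw [Real.mul_rpow ht.le ha]
    exact div_le_self (by positivity) hpq.lt.le
  have hq : (t * ‖z‖)⁻¹ ^ q / q ≤ (t ^ q)⁻¹ * cutoff q z := by
    rw [cutoff, indicator_of_mem (mem_ball_zero_iff.2 h1), Real.rpow_neg hz.le,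
      Real.inv_rpow (mul_nonneg ht.le hz.le), Real.mul_rpow ht.le hz.le, mul_inv]
    exact div_le_self (by positivity) hpq.symm.lt.le
  have : a / ‖z‖ = t * a * (t * ‖z‖)⁻¹ := by field_simp
  linarith

end Pointwise

variable {E : Type*} [NormedAddCommGroup E] [NormedSpace ℝ E] [FiniteDimensional ℝ E]
  [MeasurableSpace E] [BorelSpace E] {μ : Measure E} [μ.IsAddHaarMeasure]

lemma integrable_cutoff {s : ℝ} (hd : 1 ≤ Module.finrank ℝ E) (hs : s < Module.finrank ℝ E) :
    Integrable (cutoff s) μ := by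
  refine (integrable_indicator_iff Metric.isOpen_ball.measurableSet).2 <|
    integrableOn_ball_of_norm_le_rpow (C := 1) hd hs (ae_of_all _ fun z => ?_) ?_
  · rw [one_mul, Real.norm_of_nonneg (by positivity)]
  · exact (continuous_norm.measurable.pow_const _).aestronglyMeasurable

lemma exists_integral_div_norm_sub_le {p q : ℝ} (hpq : p.HolderConjugate q)
    (hq : q < Module.finrank ℝ E) {ε : ℝ} (hε : 0 < ε) :
    ∃ C, ∀ ρ : E → ℝ, (∀ y, 0 ≤ ρ y) → Integrable ρ μ → Integrable (fun y => ρ y ^ p) μ →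
      ∀ x, Integrable (fun y => ρ y / ‖x - y‖) μ ∧
        ∫ y, ρ y / ‖x - y‖ ∂μ ≤ ε * ∫ y, ρ y ^ p ∂μ + C + ∫ y, ρ y ∂μ := by
  have hd : 1 ≤ Module.finrank ℝ E := by exact_mod_cast (hpq.symm.lt.trans hq).le
  have hK := integrable_cutoff (μ := μ) hd hq
  set t := ε ^ p⁻¹
  have ht : 0 < t := by positivity
  refine ⟨(t ^ q)⁻¹ * ∫ z, cutoff q z ∂μ, fun ρ hρ0 hρ hρp x => ?_⟩
  have hρp' := hρp.const_mul (t ^ p)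
  have hK' := (hK.comp_sub_left x).const_mul (t ^ q)⁻¹
  have hle : ∀ y, ρ y / ‖x - y‖ ≤ t ^ p * ρ y ^ p + (t ^ q)⁻¹ * cutoff q (x - y) + ρ y :=
    fun y => div_norm_le_add_cutoff hpq (hρ0 y) ht (x - y)
  have hmajor : Integrable (fun y => t ^ p * ρ y ^ p + (t ^ q)⁻¹ * cutoff q (x - y) + ρ y) μ :=
    (hρp'.add hK').add hρ
  have hint : Integrable (fun y => ρ y / ‖x - y‖) μ := by
    refine hmajor.mono' (hρ.aestronglyMeasurable.aemeasurable.div (by fun_prop)).aestronglyMeasurable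
      (ae_of_all _ fun y => ?_)
    rw [Real.norm_of_nonneg (div_nonneg (hρ0 y) (norm_nonneg _))]
    exact hle y
  refine ⟨hint, (integral_mono hint hmajor hle).trans_eq ?_⟩
  rw [integral_add (f := fun y => t ^ p * ρ y ^ p + (t ^ q)⁻¹ * cutoff q (x - y)) (hρp'.add hK') hρ,
    integral_add hρp' hK', integral_const_mul, integral_const_mul,
    integral_sub_left_eq_self (cutoff q) μ x, Real.rpow_inv_rpow hε.le hpq.pos.ne']

end RieszKernel

lemma abs_dblInt_self_le {f h : Sp → ℝ} {c V : ℝ} (hh : ∀ x, 0 ≤ h x)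
    (hfh : ∀ x, |f x| ≤ c * h x) (hint : Integrable h)
    (hpot : ∀ x, Integrable fun y => h y / ‖x - y‖) (hV : ∀ x, ∫ y, h y / ‖x - y‖ ≤ V) :
    |dblInt f f| ≤ c ^ 2 * V * ∫ x, h x := by
  have hinner : ∀ x, ‖∫ y, f x * f y / ‖x - y‖‖ ≤ c ^ 2 * V * h x := fun x => by
    have hcx : 0 ≤ c * h x := (abs_nonneg _).trans (hfh x)
    calc ‖∫ y, f x * f y / ‖x - y‖‖
        ≤ ∫ y, c ^ 2 * h x * (h y / ‖x - y‖) :=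
          norm_integral_le_of_norm_le ((hpot x).const_mul _) <| ae_of_all _ fun y => by
            rw [Real.norm_eq_abs, abs_div, abs_mul, abs_norm, mul_div_assoc]
            calc |f x| * (|f y| / ‖x - y‖) ≤ c * h x * (c * h y / ‖x - y‖) :=
                  mul_le_mul (hfh x) (by gcongr; exact hfh y) (by positivity) hcx
              _ = c ^ 2 * h x * (h y / ‖x - y‖) := by ring
      _ = c ^ 2 * h x * ∫ y, h y / ‖x - y‖ := integral_const_mul _ _
      _ ≤ c ^ 2 * h x * V := mul_le_mul_of_nonneg_left (hV x) (mul_nonneg (sq_nonneg c) (hh x))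
      _ = c ^ 2 * V * h x := by ring
  calc |dblInt f f| = ‖∫ x, ∫ y, f x * f y / ‖x - y‖‖ := (Real.norm_eq_abs _).symm
    _ ≤ ∫ x, c ^ 2 * V * h x := norm_integral_le_of_norm_le (hint.const_mul _) (ae_of_all _ hinner)
    _ = c ^ 2 * V * ∫ x, h x := integral_const_mul _ _

lemma Real.rpow_le_self_add_rpow {a r p : ℝ} (ha : 0 ≤ a) (hr : 1 ≤ r) (hrp : r ≤ p) :
    a ^ r ≤ a + a ^ p := by
  rcases le_total a 1 with h1 | h1
  · linarith [Real.rpow_le_self_of_le_one ha h1 hr, Real.rpow_nonneg ha p]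
  · linarith [Real.rpow_le_rpow_of_exponent_le h1 hrp]

lemma MeasureTheory.Integrable.rpow_of_ae_le {α : Type*} [MeasurableSpace α] {μ : Measure α}
    {f : α → ℝ} {p M : ℝ} (hf : Integrable f μ) (hf0 : ∀ x, 0 ≤ f x) (hfM : ∀ᵐ x ∂μ, f x ≤ M)
    (hp : 1 ≤ p) : Integrable (fun x => f x ^ p) μ := by
  refine (hf.const_mul (M ^ (p - 1))).mono'
    (hf.aestronglyMeasurable.aemeasurable.pow_const p).aestronglyMeasurable ?_
  filter_upwards [hfM] with x hx
  rw [Real.norm_of_nonneg (Real.rpow_nonneg (hf0 x) p)]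
  calc f x ^ p = f x ^ (p - 1) * f x := by
        rw [← Real.rpow_add_one' (hf0 x) (by linarith), sub_add_cancel]
    _ ≤ M ^ (p - 1) * f x :=
        mul_le_mul_of_nonneg_right (Real.rpow_le_rpow (hf0 x) hx (by linarith)) (hf0 x)

lemma MeasureTheory.integral_rpow_le_integral_add_integral_rpow {α : Type*} [MeasurableSpace α]
    {μ : Measure α} {f : α → ℝ} {r p : ℝ} (hf0 : ∀ x, 0 ≤ f x) (hf : Integrable f μ)
    (hfp : Integrable (fun x => f x ^ p) μ) (hr : 1 ≤ r) (hrp : r ≤ p) :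
    ∫ x, f x ^ r ∂μ ≤ ∫ x, f x ∂μ + ∫ x, f x ^ p ∂μ := by
  rw [← integral_add hf hfp]
  exact integral_mono_of_nonneg (ae_of_all _ fun x => Real.rpow_nonneg (hf0 x) r) (hf.add hfp)
    (ae_of_all _ fun x => Real.rpow_le_self_add_rpow (hf0 x) hr hrp)

lemma InWR.mono {Ne Np R R' : ℝ} {ρe ρp : Sp → ℝ} (hR : R ≤ R') (h : InWR Ne Np R ρe ρp) :
    InWR Ne Np R' ρe ρp := by
  obtain ⟨me, mp, he, hp, re, rp, ie, ip, ne, np, ze, zp, be, bp⟩ := h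
  exact ⟨me, mp, he, hp, re, rp, ie, ip, ne, np, fun x hx => ze x (hR.trans_lt hx),
    fun x hx => zp x (hR.trans_lt hx), be.mono fun x hx => hx.trans hR,
    bp.mono fun x hx => hx.trans hR⟩

lemma InWR.integrable_rpow {Ne Np R p : ℝ} {ρe ρp : Sp → ℝ} (h : InWR Ne Np R ρe ρp)
    (hp : 1 ≤ p) : Integrable (fun x => ρe x ^ p) ∧ Integrable (fun x => ρp x ^ p) := by
  obtain ⟨-, -, he0, hp0, -, -, he, hp', -, -, -, -, heR, hpR⟩ := h
  exact ⟨he.rpow_of_ae_le he0 heR hp, hp'.rpow_of_ae_le hp0 hpR hp⟩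

lemma kinetic_sub_le_energy {ke kp q G me mp : ℝ} (hG : 0 ≤ G) (hme : 0 ≤ me) (hmp : 0 ≤ mp)
    {ρe ρp : Sp → ℝ} (hρe : ∀ x, 0 ≤ ρe x) (hρp : ∀ x, 0 ≤ ρp x)
    (hint : Integrable fun x => ρe x + ρp x) {V : ℝ}
    (hpot : ∀ x, Integrable fun y => (ρe y + ρp y) / ‖x - y‖)
    (hV : ∀ x, ∫ y, (ρe y + ρp y) / ‖x - y‖ ≤ V) :
    ke * (∫ x, ρe x ^ ((5:ℝ)/3)) + kp * (∫ x, ρp x ^ ((5:ℝ)/3))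
      - (q ^ 2 / 2 + G / 2 * (me + mp) ^ 2) * V * ∫ x, (ρe x + ρp x) ≤
      energy ke kp q G me mp ρe ρp := by
  have hh : ∀ x, 0 ≤ ρe x + ρp x := fun x => add_nonneg (hρe x) (hρp x)
  have hcharge := abs_dblInt_self_le (f := fun x => ρp x - ρe x) (c := 1) hh
    (fun x => by rw [one_mul, abs_sub_le_iff]; constructor <;> linarith [hρe x, hρp x])
    hint hpot hV
  have hmass := abs_dblInt_self_le (f := fun x => mp * ρp x + me * ρe x) (c := me + mp) hh
    (fun x => by
      rw [abs_of_nonneg (add_nonneg (mul_nonneg hmp (hρp x)) (mul_nonneg hme (hρe x)))]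
      nlinarith [mul_nonneg hme (hρp x), mul_nonneg hmp (hρe x)])
    hint hpot hV
  set D₁ := dblInt (fun x => ρp x - ρe x) (fun x => ρp x - ρe x)
  set D₂ := dblInt (fun x => mp * ρp x + me * ρe x) (fun x => mp * ρp x + me * ρe x)
  have h₁ : -(q ^ 2 / 2 * (1 ^ 2 * V * ∫ x, (ρe x + ρp x))) ≤ q ^ 2 / 2 * D₁ := by
    rw [← mul_neg]
    exact mul_le_mul_of_nonneg_left ((neg_le_neg hcharge).trans (neg_abs_le D₁)) (by positivity)
  have h₂ : G / 2 * D₂ ≤ G / 2 * ((me + mp) ^ 2 * V * ∫ x, (ρe x + ρp x)) :=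
    mul_le_mul_of_nonneg_left ((le_abs_self D₂).trans hmass) (by positivity)
  rw [energy]
  linarith

lemma exists_kinetic_le_energy_add {ke kp q G me mp : ℝ} (hke : 0 < ke) (hkp : 0 < kp)
    (hG : 0 ≤ G) (hme : 0 ≤ me) (hmp : 0 ≤ mp) {Ne Np : ℝ} (hN : 0 ≤ Ne + Np) :
    ∃ C, ∀ R ρe ρp, InWR Ne Np R ρe ρp →
      min ke kp / 2 * ((∫ x, ρe x ^ ((5:ℝ)/3)) + ∫ x, ρp x ^ ((5:ℝ)/3)) ≤
        energy ke kp q G me mp ρe ρp + C := by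
  set k := min ke kp
  set A := (q ^ 2 / 2 + G / 2 * (me + mp) ^ 2) * (Ne + Np) with hA_def
  have hA : 0 ≤ A := by positivity
  set ε := k / (2 * (A + 1))
  have hAε : A * ε ≤ k / 2 := by
    rw [mul_div_assoc', div_le_div_iff₀ (by positivity) two_pos]
    nlinarith [lt_min hke hkp]
  have hpq : ((5:ℝ)/3).HolderConjugate (5/2) := by constructor <;> norm_num
  obtain ⟨C, hC⟩ := RieszKernel.exists_integral_div_norm_sub_le (μ := (volume : Measure Sp)) hpq
    (by rw [finrank_euclideanSpace_fin]; norm_num) (ε := ε) (by positivity)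
  refine ⟨A * (2 * C + (Ne + Np)), fun R ρe ρp hρ => ?_⟩
  obtain ⟨hρe53, hρp53⟩ := hρ.integrable_rpow (p := 5/3) (by norm_num)
  obtain ⟨-, -, hρe0, hρp0, -, -, hρe, hρp, hNe, hNp, -⟩ := hρ
  set Te := ∫ x, ρe x ^ ((5:ℝ)/3)
  set Tp := ∫ x, ρp x ^ ((5:ℝ)/3)
  have hpot : ∀ x, Integrable (fun y => (ρe y + ρp y) / ‖x - y‖) ∧
      ∫ y, (ρe y + ρp y) / ‖x - y‖ ≤ ε * (Te + Tp) + 2 * C + (Ne + Np) := fun x => by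
    obtain ⟨hie, hVe⟩ := hC ρe hρe0 hρe hρe53 x
    obtain ⟨hip, hVp⟩ := hC ρp hρp0 hρp hρp53 x
    simp only [add_div]
    refine ⟨hie.add hip, ?_⟩
    rw [integral_add hie hip]
    linarith
  have hE := kinetic_sub_le_energy (ke := ke) (kp := kp) (q := q) hG hme hmp hρe0 hρp0
    (hρe.add hρp) (fun x => (hpot x).1) (fun x => (hpot x).2)
  rw [integral_add hρe hρp, hNe, hNp] at hE
  have hTe : 0 ≤ Te := integral_nonneg fun x => Real.rpow_nonneg (hρe0 x) _
  have hTp : 0 ≤ Tp := integral_nonneg fun x => Real.rpow_nonneg (hρp0 x) _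
  have hke' : k * Te ≤ ke * Te := mul_le_mul_of_nonneg_right (min_le_left _ _) hTe
  have hkp' : k * Tp ≤ kp * Tp := mul_le_mul_of_nonneg_right (min_le_right _ _) hTp
  have hsplit : (q ^ 2 / 2 + G / 2 * (me + mp) ^ 2) * (ε * (Te + Tp) + 2 * C + (Ne + Np)) *
      (Ne + Np) = A * ε * (Te + Tp) + A * (2 * C + (Ne + Np)) := by
    rw [hA_def]; ring
  linarith [mul_le_mul_of_nonneg_right hAε (add_nonneg hTe hTp)]

theorem stmt7_general (ke kp q G me mp : ℝ)
    (hke : 0 < ke) (hkp : 0 < kp) (hG : 0 < G) (hme : 0 < me) (hmp : 0 < mp)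
    (Ne Np : ℝ) (hNe : 0 < Ne) (hNp : 0 < Np)
    (R₀ : ℝ) (hne : ∃ σe σp : Sp → ℝ, InWR Ne Np R₀ σe σp) :
    ∃ k₀ : ℝ, ∀ R : ℝ, R₀ ≤ R → ∀ ρe ρp : Sp → ℝ, InWR Ne Np R ρe ρp →
      (∀ σe σp : Sp → ℝ, InWR Ne Np R σe σp →
        energy ke kp q G me mp ρe ρp ≤ energy ke kp q G me mp σe σp) →
      (∫ x : Sp, ρe x ^ ((4:ℝ)/3)) ^ ((3:ℝ)/4) ≤ k₀ ∧
      (∫ x : Sp, ρp x ^ ((4:ℝ)/3)) ^ ((3:ℝ)/4) ≤ k₀ := by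
  obtain ⟨σe, σp, hσ⟩ := hne
  obtain ⟨C, hC⟩ := exists_kinetic_le_energy_add (q := q) hke hkp hG.le hme.le hmp.le
    (add_pos hNe hNp).le
  set k := min ke kp
  set E₀ := energy ke kp q G me mp σe σp
  refine ⟨(Ne + Np + 2 * (E₀ + C) / k) ^ ((3:ℝ)/4), fun R hR ρe ρp hρ hmin => ?_⟩
  have hT : (∫ x, ρe x ^ ((5:ℝ)/3)) + ∫ x, ρp x ^ ((5:ℝ)/3) ≤ 2 * (E₀ + C) / k := by
    rw [le_div_iff₀ (lt_min hke hkp)]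
    linarith [hC R ρe ρp hρ, hmin σe σp (hσ.mono hR)]
  obtain ⟨hρe53, hρp53⟩ := hρ.integrable_rpow (p := 5/3) (by norm_num)
  obtain ⟨-, -, hρe0, hρp0, -, -, hρe, hρp, hNe', hNp', -⟩ := hρ
  have hTe : 0 ≤ ∫ x, ρe x ^ ((5:ℝ)/3) := integral_nonneg fun x => Real.rpow_nonneg (hρe0 x) _
  have hTp : 0 ≤ ∫ x, ρp x ^ ((5:ℝ)/3) := integral_nonneg fun x => Real.rpow_nonneg (hρp0 x) _
  have hL43 : ∀ ρ : Sp → ℝ, (∀ x, 0 ≤ ρ x) → Integrable ρ →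
      Integrable (fun x => ρ x ^ ((5:ℝ)/3)) →
      (∫ x, ρ x) + ∫ x, ρ x ^ ((5:ℝ)/3) ≤ Ne + Np + 2 * (E₀ + C) / k →
      (∫ x, ρ x ^ ((4:ℝ)/3)) ^ ((3:ℝ)/4) ≤ (Ne + Np + 2 * (E₀ + C) / k) ^ ((3:ℝ)/4) :=
    fun ρ hρ0 hρ hρ53 hle => Real.rpow_le_rpow (integral_nonneg fun x => Real.rpow_nonneg (hρ0 x) _)
      ((integral_rpow_le_integral_add_integral_rpow hρ0 hρ hρ53 (by norm_num) (by norm_num)).trans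
        hle) (by norm_num)
  exact ⟨hL43 ρe hρe0 hρe hρe53 (by linarith), hL43 ρp hρp0 hρp hρp53 (by linarith)⟩

/-- Lemma 4.4 (uniform `L^{4/3}` bound): there is a constant `k₀` bounding the
`L^{4/3}` norms of all minimizers over `W_R` for every `R ≥ R₀`. -/
theorem stmt7 (ke kp q G me mp : ℝ)
    (hke : 0 < ke) (hkp : 0 < kp) (hq : 0 < q) (hG : 0 < G) (hme : 0 < me) (hmp : 0 < mp)
    (hGp : G * mp ^ 2 < q ^ 2) (hGe : G * me ^ 2 < q ^ 2)
    (Ne Np : ℝ) (hNe : 0 < Ne) (hNp : 0 < Np)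
    (R₀ : ℝ) (hR₀ : 0 < R₀) (hne : ∃ σe σp : Sp → ℝ, InWR Ne Np R₀ σe σp) :
    ∃ k₀ : ℝ, ∀ R : ℝ, R₀ ≤ R → ∀ ρe ρp : Sp → ℝ, InWR Ne Np R ρe ρp →
      (∀ σe σp : Sp → ℝ, InWR Ne Np R σe σp →
        energy ke kp q G me mp ρe ρp ≤ energy ke kp q G me mp σe σp) →
      (∫ x : Sp, ρe x ^ ((4:ℝ)/3)) ^ ((3:ℝ)/4) ≤ k₀ ∧
      (∫ x : Sp, ρp x ^ ((4:ℝ)/3)) ^ ((3:ℝ)/4) ≤ k₀ :=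
  stmt7_general ke kp q G me mp hke hkp hG hme hmp Ne Np hNe hNp R₀ hne
end
end

section
/- Suppose N_e, N_p > 0 satisfy the strict ratio condition (1 − G m_p²/q²)/(1 + G m_e m_p/q²) < N_e/N_p < (1 + G m_e m_p/q²)/(1 − G m_e²/q²). Then there exist a constant e < 0 and R₁ > 0 such that for every R ≥ R₁, every minimizer (ρ_e^R, ρ_p^R) of the energy E over W_R satisfies E(ρ_e^R, ρ_p^R) ≤ e. -/
open MeasureTheory Set

noncomputable section

/-!
Compare the minimizer with the uniform densities `N / |B_L|` on a ball `B_L` of radius `L`.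
Their kinetic energy is `(k_e N_e^{5/3} + k_p N_p^{5/3}) / |B_L|^{2/3} ~ L⁻²`, while their
interaction energy is `-(G (m_p N_p + m_e N_e)² - q² (N_p - N_e)²) / (2 |B_L|²)` times the
self-interaction `∬_{B_L × B_L} 1/|x - y| ≥ |B_L|² / (2L)` of the ball. The ratio condition is
exactly what makes `G (m_p N_p + m_e N_e)² - q² (N_p - N_e)²` positive, so for one large `L` the
trial energy is a negative number `e`, and the trial pair lies in `W_R` once
`R ≥ max (L, N / |B_L|)`.
-/

open Metric

section CoulombPotential

variable {E : Type*} [NormedAddCommGroup E]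

lemma indicator_closedBall_div_norm_sub_le {L : ℝ} {x : E} (hx : x ∈ closedBall (0:E) L)
    (y : E) :
    (closedBall (0:E) L).indicator 1 y / ‖x - y‖
      ≤ (closedBall (0:E) (2 * L)).indicator (fun z => ‖z‖⁻¹) (y - x) := by
  by_cases hy : y ∈ closedBall (0:E) L
  · have hyx : y - x ∈ closedBall (0:E) (2 * L) := by
      rw [mem_closedBall_zero_iff] at *
      linarith [norm_sub_le y x]
    simp [hy, hyx, norm_sub_rev]
  · simp only [hy, not_false_eq_true, indicator_of_notMem, zero_div]
    exact indicator_nonneg (fun _ _ => inv_nonneg.2 (norm_nonneg _)) _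

variable [MeasurableSpace E] (μ : Measure E)

def coulombPotential (f : E → ℝ) (x : E) : ℝ := ∫ y, f y / ‖x - y‖ ∂μ

lemma coulombPotential_nonneg {f : E → ℝ} (hf : 0 ≤ f) (x : E) :
    0 ≤ coulombPotential μ f x :=
  integral_nonneg fun y => div_nonneg (hf y) (norm_nonneg _)

variable [NormedSpace ℝ E] [FiniteDimensional ℝ E] [BorelSpace E] [μ.IsAddHaarMeasure]
  {μ} {L : ℝ} {x : E}

lemma locallyIntegrable_inv_norm (hE : 2 ≤ Module.finrank ℝ E) :
    LocallyIntegrable (fun x : E => ‖x‖⁻¹) μ :=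
  locallyIntegrable_of_norm_le_rpow (C := 1) (α := 1) (by omega) (by exact_mod_cast hE)
    (ae_of_all _ fun x => by simp [Real.rpow_neg_one]) measurable_norm.inv.aestronglyMeasurable

lemma integrable_indicator_closedBall_inv_norm (hE : 2 ≤ Module.finrank ℝ E) (r : ℝ) :
    Integrable ((closedBall (0:E) r).indicator fun x => ‖x‖⁻¹) μ :=
  ((locallyIntegrable_inv_norm hE).integrableOn_isCompact (isCompact_closedBall 0 r))
    |>.integrable_indicator measurableSet_closedBall

lemma integrable_indicator_closedBall_one (r : ℝ) :
    Integrable ((closedBall (0:E) r).indicator (1 : E → ℝ)) μ :=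
  (integrableOn_const measure_closedBall_lt_top.ne).integrable_indicator measurableSet_closedBall

lemma aestronglyMeasurable_coulombPotential {f : E → ℝ} (hf : Measurable f) :
    AEStronglyMeasurable (coulombPotential μ f) μ :=
  ((hf.comp measurable_snd).div (measurable_fst.sub measurable_snd).norm).stronglyMeasurable
    |>.integral_prod_right' |>.aestronglyMeasurable

lemma integrable_indicator_closedBall_div_norm_sub (hE : 2 ≤ Module.finrank ℝ E)
    (hx : x ∈ closedBall (0:E) L) :
    Integrable (fun y => (closedBall (0:E) L).indicator 1 y / ‖x - y‖) μ :=
  ((integrable_indicator_closedBall_inv_norm hE (2 * L)).comp_sub_right x).mono'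
    ((measurable_one.indicator measurableSet_closedBall).div
      (measurable_const.sub measurable_id).norm).aestronglyMeasurable
    (ae_of_all _ fun y => by
      rw [Real.norm_of_nonneg (div_nonneg (indicator_nonneg (f := 1) (fun _ _ => zero_le_one) y)
        (norm_nonneg _))]
      exact indicator_closedBall_div_norm_sub_le hx y)

lemma coulombPotential_indicator_closedBall_le (hE : 2 ≤ Module.finrank ℝ E)
    (hx : x ∈ closedBall (0:E) L) :
    coulombPotential μ ((closedBall (0:E) L).indicator 1) x
      ≤ ∫ z, (closedBall (0:E) (2 * L)).indicator (fun z => ‖z‖⁻¹) z ∂μ :=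
  (integral_mono (integrable_indicator_closedBall_div_norm_sub hE hx)
    ((integrable_indicator_closedBall_inv_norm hE (2 * L)).comp_sub_right x)
    (indicator_closedBall_div_norm_sub_le hx)).trans_eq (integral_sub_right_eq_self _ x)

lemma measureReal_closedBall_div_le_coulombPotential (hE : 2 ≤ Module.finrank ℝ E)
    (hx : x ∈ closedBall (0:E) L) :
    μ.real (closedBall (0:E) L) / (2 * L)
      ≤ coulombPotential μ ((closedBall (0:E) L).indicator 1) x := by
  have : Nontrivial E := Module.nontrivial_of_finrank_pos (R := ℝ) (by omega)
  rw [div_eq_mul_inv, ← integral_indicator_one measurableSet_closedBall, ← integral_mul_const]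
  refine integral_mono_ae ((integrable_indicator_closedBall_one L).mul_const _)
    (integrable_indicator_closedBall_div_norm_sub hE hx) ?_
  -- off the diagonal, where `‖x - x‖⁻¹ = 0` is a junk value
  filter_upwards [μ.ae_ne x] with y hyx
  by_cases hy : y ∈ closedBall (0:E) L
  · have hd : ‖x - y‖ ≤ 2 * L := by
      rw [mem_closedBall_zero_iff] at hx hy
      linarith [norm_sub_le x y]
    simpa [hy, one_div] using inv_anti₀ (norm_pos_iff.2 (sub_ne_zero.2 hyx.symm)) hd
  · simp [hy]

end CoulombPotential

lemma dblInt_eq_integral_mul_coulombPotential (f g : Sp → ℝ) :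
    dblInt f g = ∫ x, f x * coulombPotential volume g x := by
  simp only [dblInt, coulombPotential, mul_div_assoc, integral_const_mul]

lemma dblInt_const_mul (c : ℝ) (f : Sp → ℝ) :
    dblInt (fun x => c * f x) (fun x => c * f x) = c ^ 2 * dblInt f f := by
  simp only [dblInt, ← integral_const_mul]
  congr 1; ext x; congr 1; ext y; ring

lemma sq_measureReal_closedBall_div_le_dblInt (L : ℝ) :
    volume.real (closedBall (0:Sp) L) ^ 2 / (2 * L) ≤
      dblInt ((closedBall (0:Sp) L).indicator 1) ((closedBall (0:Sp) L).indicator 1) := by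
  have hE : 2 ≤ Module.finrank ℝ Sp := by simp
  set u : Sp → ℝ := (closedBall (0:Sp) L).indicator 1
  have hu : Measurable u := measurable_one.indicator measurableSet_closedBall
  have hu_nonneg : 0 ≤ u := fun y => indicator_nonneg (f := 1) (fun _ _ => zero_le_one) y
  have hint : Integrable (fun x => u x * coulombPotential volume u x) := by
    refine ((integrable_indicator_closedBall_one L).mul_const
      (∫ z, (closedBall (0:Sp) (2 * L)).indicator (fun z => ‖z‖⁻¹) z)).mono'
      (hu.aestronglyMeasurable.mul (aestronglyMeasurable_coulombPotential hu))
      (ae_of_all _ fun x => ?_)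
    by_cases hx : x ∈ closedBall (0:Sp) L
    · simpa [u, hx, abs_of_nonneg (coulombPotential_nonneg volume hu_nonneg x)]
        using coulombPotential_indicator_closedBall_le hE hx
    · simp [u, hx]
  calc volume.real (closedBall (0:Sp) L) ^ 2 / (2 * L)
      = ∫ x, u x * (volume.real (closedBall (0:Sp) L) / (2 * L)) := by
        rw [integral_mul_const, integral_indicator_one measurableSet_closedBall]; ring
    _ ≤ ∫ x, u x * coulombPotential volume u x := by
        refine integral_mono ((integrable_indicator_closedBall_one L).mul_const _) hint fun x => ?_
        by_cases hx : x ∈ closedBall (0:Sp) L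
        · simpa [u, hx] using measureReal_closedBall_div_le_coulombPotential hE hx
        · simp [u, hx]
    _ = _ := (dblInt_eq_integral_mul_coulombPotential u u).symm

def ballDensity (N L : ℝ) (x : Sp) : ℝ :=
  N / volume.real (closedBall (0:Sp) L) * (closedBall (0:Sp) L).indicator 1 x

section BallDensity

variable {N L R : ℝ}

lemma measureReal_closedBall_pos (hL : 0 < L) : 0 < volume.real (closedBall (0:Sp) L) :=
  ENNReal.toReal_pos (measure_closedBall_pos volume 0 hL).ne' measure_closedBall_lt_top.ne

lemma integral_ballDensity (hL : 0 < L) : ∫ x, ballDensity N L x = N := by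
  simp only [ballDensity]
  rw [integral_const_mul, integral_indicator_one measurableSet_closedBall,
    div_mul_cancel₀ _ (measureReal_closedBall_pos hL).ne']

lemma ballDensity_nonneg (hN : 0 ≤ N) (x : Sp) : 0 ≤ ballDensity N L x :=
  mul_nonneg (div_nonneg hN measureReal_nonneg)
    (indicator_nonneg (f := 1) (fun _ _ => zero_le_one) x)

lemma ballDensity_le (hN : 0 ≤ N) (x : Sp) :
    ballDensity N L x ≤ N / volume.real (closedBall (0:Sp) L) := by
  by_cases hx : x ∈ closedBall (0:Sp) L
  · simp [ballDensity, hx]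
  · simpa [ballDensity, hx] using div_nonneg hN measureReal_nonneg

lemma ballDensity_eq_zero {x : Sp} (hx : L < ‖x‖) : ballDensity N L x = 0 := by
  simp [ballDensity, hx]

lemma radial_ballDensity : Radial (ballDensity N L) := by
  intro x y h
  have hmem : x ∈ closedBall (0:Sp) L ↔ y ∈ closedBall (0:Sp) L := by
    rw [mem_closedBall_zero_iff, mem_closedBall_zero_iff, h]
  by_cases hx : x ∈ closedBall (0:Sp) L
  · simp [ballDensity, hx, hmem.1 hx]
  · simp [ballDensity, hx, mt hmem.2 hx]

lemma inWR_ballDensity {Ne Np : ℝ} (hL : 0 < L) (hLR : L ≤ R) (hNe : 0 ≤ Ne) (hNp : 0 ≤ Np)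
    (hNeR : Ne / volume.real (closedBall (0:Sp) L) ≤ R)
    (hNpR : Np / volume.real (closedBall (0:Sp) L) ≤ R) :
    InWR Ne Np R (ballDensity Ne L) (ballDensity Np L) := by
  have hmeas (N : ℝ) : Measurable (ballDensity N L) :=
    (measurable_one.indicator measurableSet_closedBall).const_mul _
  have hint (N : ℝ) : Integrable (ballDensity N L) :=
    (integrable_indicator_closedBall_one L).const_mul _
  exact ⟨hmeas Ne, hmeas Np, ballDensity_nonneg hNe, ballDensity_nonneg hNp, radial_ballDensity,
    radial_ballDensity, hint Ne, hint Np, integral_ballDensity hL, integral_ballDensity hL,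
    fun x hx => ballDensity_eq_zero (hLR.trans_lt hx),
    fun x hx => ballDensity_eq_zero (hLR.trans_lt hx),
    ae_of_all _ fun x => (ballDensity_le hNe x).trans hNeR,
    ae_of_all _ fun x => (ballDensity_le hNp x).trans hNpR⟩

end BallDensity

section BallEnergy

variable {N L : ℝ}

lemma integral_ballDensity_rpow (hL : 0 < L) (hN : 0 ≤ N) {p : ℝ} (hp : p ≠ 0) :
    ∫ x, ballDensity N L x ^ p = N ^ p / volume.real (closedBall (0:Sp) L) ^ (p - 1) := by
  set V := volume.real (closedBall (0:Sp) L) with hVdef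
  have hV : 0 < V := measureReal_closedBall_pos hL
  have hpt (x : Sp) :
      ballDensity N L x ^ p = (N / V) ^ p * (closedBall (0:Sp) L).indicator 1 x := by
    by_cases hx : x ∈ closedBall (0:Sp) L
    · simp [ballDensity, hx, V]
    · simp [ballDensity, hx, Real.zero_rpow hp]
  simp only [hpt]
  rw [integral_const_mul, integral_indicator_one measurableSet_closedBall, Real.div_rpow hN hV.le,
    Real.rpow_sub_one hV.ne', ← hVdef]
  field_simp

lemma energy_ballDensity (ke kp q G me mp : ℝ) {Ne Np : ℝ} (hL : 0 < L) (hNe : 0 ≤ Ne)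
    (hNp : 0 ≤ Np) :
    energy ke kp q G me mp (ballDensity Ne L) (ballDensity Np L) =
      (ke * Ne ^ ((5:ℝ)/3) + kp * Np ^ ((5:ℝ)/3))
          / volume.real (closedBall (0:Sp) L) ^ ((2:ℝ)/3)
      - (G * (mp * Np + me * Ne) ^ 2 - q ^ 2 * (Np - Ne) ^ 2)
          / (2 * volume.real (closedBall (0:Sp) L) ^ 2)
          * dblInt ((closedBall (0:Sp) L).indicator 1) ((closedBall (0:Sp) L).indicator 1) := by
  set V := volume.real (closedBall (0:Sp) L) with hVdef
  have hV : 0 < V := measureReal_closedBall_pos hL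
  have hcharge : (fun x => ballDensity Np L x - ballDensity Ne L x)
      = fun x => (Np - Ne) / V * (closedBall (0:Sp) L).indicator 1 x := by
    ext x; simp only [ballDensity]; ring
  have hmass : (fun x => mp * ballDensity Np L x + me * ballDensity Ne L x)
      = fun x => (mp * Np + me * Ne) / V * (closedBall (0:Sp) L).indicator 1 x := by
    ext x; simp only [ballDensity]; ring
  have h53 : (5:ℝ)/3 - 1 = 2/3 := by norm_num
  rw [energy, hcharge, hmass, dblInt_const_mul, dblInt_const_mul,
    integral_ballDensity_rpow hL hNe (by norm_num), integral_ballDensity_rpow hL hNp (by norm_num),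
    h53, ← hVdef]
  field_simp
  ring

lemma energy_ballDensity_le (ke kp q G me mp : ℝ) {Ne Np : ℝ} (hL : 0 < L) (hNe : 0 ≤ Ne)
    (hNp : 0 ≤ Np) (hA : q ^ 2 * (Np - Ne) ^ 2 ≤ G * (mp * Np + me * Ne) ^ 2) :
    energy ke kp q G me mp (ballDensity Ne L) (ballDensity Np L) ≤
      (ke * Ne ^ ((5:ℝ)/3) + kp * Np ^ ((5:ℝ)/3))
          / (volume.real (closedBall (0:Sp) 1) ^ ((2:ℝ)/3) * L ^ 2)
      - (G * (mp * Np + me * Ne) ^ 2 - q ^ 2 * (Np - Ne) ^ 2) / (4 * L) := by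
  have hV23 : volume.real (closedBall (0:Sp) L) ^ ((2:ℝ)/3)
      = volume.real (closedBall (0:Sp) 1) ^ ((2:ℝ)/3) * L ^ 2 := by
    rw [Measure.addHaar_real_closedBall' (volume : Measure Sp) 0 hL.le, finrank_euclideanSpace_fin,
      Real.mul_rpow (by positivity) measureReal_nonneg, ← Real.rpow_natCast,
      ← Real.rpow_mul hL.le]
    norm_num [mul_comm]
  rw [energy_ballDensity ke kp q G me mp hL hNe hNp, hV23]
  set V := volume.real (closedBall (0:Sp) L)
  have hV : 0 < V := measureReal_closedBall_pos hL
  gcongr ?_ - ?_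
  calc (G * (mp * Np + me * Ne) ^ 2 - q ^ 2 * (Np - Ne) ^ 2) / (4 * L)
      = (G * (mp * Np + me * Ne) ^ 2 - q ^ 2 * (Np - Ne) ^ 2) / (2 * V ^ 2)
          * (V ^ 2 / (2 * L)) := by
        field_simp; ring
    _ ≤ _ := by gcongr; exact sq_measureReal_closedBall_div_le_dblInt L

end BallEnergy

lemma mul_sq_lt_of_mul_lt_mul {q G m d S : ℝ} (hq : 0 < q) (hG : 0 < G) (hS : 0 < S)
    (hGm : G * m ^ 2 < q ^ 2) (hd : 0 ≤ d) (h : q ^ 2 * d < G * m * S) :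
    q ^ 2 * d ^ 2 < G * S ^ 2 := by
  have hq2 : 0 < q ^ 2 := by positivity
  have h1 : (q ^ 2 * d) ^ 2 < (G * m * S) ^ 2 := pow_lt_pow_left₀ h (by positivity) two_ne_zero
  have h2 : (G * m * S) ^ 2 < q ^ 2 * (G * S ^ 2) := by
    rw [show (G * m * S) ^ 2 = G * m ^ 2 * (G * S ^ 2) by ring]
    exact mul_lt_mul_of_pos_right hGm (by positivity)
  exact lt_of_mul_lt_mul_left (by linarith) hq2.le

lemma mul_sq_sub_lt_of_ratio_bounds {q G me mp Ne Np : ℝ} (hq : 0 < q) (hG : 0 < G)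
    (hme : 0 < me) (hmp : 0 < mp) (hGp : G * mp ^ 2 < q ^ 2) (hGe : G * me ^ 2 < q ^ 2)
    (hNe : 0 < Ne) (hNp : 0 < Np)
    (hlow : (1 - G * mp ^ 2 / q ^ 2) / (1 + G * me * mp / q ^ 2) < Ne / Np)
    (hhigh : Ne / Np < (1 + G * me * mp / q ^ 2) / (1 - G * me ^ 2 / q ^ 2)) :
    q ^ 2 * (Np - Ne) ^ 2 < G * (mp * Np + me * Ne) ^ 2 := by
  have hq2 : 0 < q ^ 2 := by positivity
  have hS : 0 < mp * Np + me * Ne := by positivity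
  have hp : q ^ 2 * (Np - Ne) < G * mp * (mp * Np + me * Ne) := by
    rw [div_lt_div_iff₀ (by positivity) hNp] at hlow
    field_simp at hlow
    linarith
  have he : q ^ 2 * (Ne - Np) < G * me * (mp * Np + me * Ne) := by
    have : 0 < 1 - G * me ^ 2 / q ^ 2 := by rwa [sub_pos, div_lt_one hq2]
    rw [div_lt_div_iff₀ hNp this] at hhigh
    field_simp at hhigh
    linarith
  rcases le_total Ne Np with h | h
  · exact mul_sq_lt_of_mul_lt_mul hq hG hS hGp (sub_nonneg.2 h) hp
  · rw [← neg_sub, neg_sq]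
    exact mul_sq_lt_of_mul_lt_mul hq hG hS hGe (sub_nonneg.2 h) he

theorem stmt8_general (ke kp q G me mp : ℝ)
    (hq : 0 < q) (hG : 0 < G) (hme : 0 < me) (hmp : 0 < mp)
    (hGp : G * mp ^ 2 < q ^ 2) (hGe : G * me ^ 2 < q ^ 2)
    (Ne Np : ℝ) (hNe : 0 < Ne) (hNp : 0 < Np)
    (hlow : (1 - G * mp ^ 2 / q ^ 2) / (1 + G * me * mp / q ^ 2) < Ne / Np)
    (hhigh : Ne / Np < (1 + G * me * mp / q ^ 2) / (1 - G * me ^ 2 / q ^ 2)) :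
    ∃ e : ℝ, e < 0 ∧ ∃ R₁ : ℝ, 0 < R₁ ∧
      ∀ R : ℝ, R₁ ≤ R → ∀ ρe ρp : Sp → ℝ, InWR Ne Np R ρe ρp →
        (∀ σe σp : Sp → ℝ, InWR Ne Np R σe σp →
          energy ke kp q G me mp ρe ρp ≤ energy ke kp q G me mp σe σp) →
        energy ke kp q G me mp ρe ρp ≤ e := by
  set K := ke * Ne ^ ((5:ℝ)/3) + kp * Np ^ ((5:ℝ)/3)
  set A := G * (mp * Np + me * Ne) ^ 2 - q ^ 2 * (Np - Ne) ^ 2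
  set c := volume.real (closedBall (0:Sp) 1) ^ ((2:ℝ)/3)
  have hA : 0 < A :=
    sub_pos.2 (mul_sq_sub_lt_of_ratio_bounds hq hG hme hmp hGp hGe hNe hNp hlow hhigh)
  have hc : 0 < c := Real.rpow_pos_of_pos (measureReal_closedBall_pos one_pos) _
  set L := max 1 (8 * K / (c * A))
  have hL : 0 < L := one_pos.trans_le (le_max_left _ _)
  have hK : K / (c * L ^ 2) ≤ A / (8 * L) := by
    have h8K : 8 * K ≤ L * (c * A) := (div_le_iff₀ (by positivity)).1 (le_max_right 1 _)
    rw [div_le_div_iff₀ (by positivity) (by positivity)]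
    nlinarith
  set V := volume.real (closedBall (0:Sp) L)
  refine ⟨-(A / (8 * L)), neg_neg_of_pos (by positivity),
    max L (max (Ne / V) (Np / V)), hL.trans_le (le_max_left _ _), ?_⟩
  intro R hR ρe ρp _ hmin
  have hσ : InWR Ne Np R (ballDensity Ne L) (ballDensity Np L) :=
    inWR_ballDensity hL (le_of_max_le_left hR) hNe.le hNp.le
      ((le_max_left _ _).trans (le_of_max_le_right hR))
      ((le_max_right _ _).trans (le_of_max_le_right hR))
  calc _ ≤ energy ke kp q G me mp (ballDensity Ne L) (ballDensity Np L) := hmin _ _ hσ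
    _ ≤ K / (c * L ^ 2) - A / (4 * L) :=
        energy_ballDensity_le ke kp q G me mp hL hNe.le hNp.le (sub_pos.1 hA).le
    _ = K / (c * L ^ 2) - 2 * (A / (8 * L)) := by ring
    _ ≤ -(A / (8 * L)) := by linarith

/-- Lemma 4.7: under the strict ratio condition, the minimal energies over `W_R` are
bounded above by a fixed negative constant for all large `R`. -/
theorem stmt8 (ke kp q G me mp : ℝ)
    (hke : 0 < ke) (hkp : 0 < kp) (hq : 0 < q) (hG : 0 < G) (hme : 0 < me) (hmp : 0 < mp)
    (hGp : G * mp ^ 2 < q ^ 2) (hGe : G * me ^ 2 < q ^ 2)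
    (Ne Np : ℝ) (hNe : 0 < Ne) (hNp : 0 < Np)
    (hlow : (1 - G * mp ^ 2 / q ^ 2) / (1 + G * me * mp / q ^ 2) < Ne / Np)
    (hhigh : Ne / Np < (1 + G * me * mp / q ^ 2) / (1 - G * me ^ 2 / q ^ 2)) :
    ∃ e : ℝ, e < 0 ∧ ∃ R₁ : ℝ, 0 < R₁ ∧
      ∀ R : ℝ, R₁ ≤ R → ∀ ρe ρp : Sp → ℝ, InWR Ne Np R ρe ρp →
        (∀ σe σp : Sp → ℝ, InWR Ne Np R σe σp →
          energy ke kp q G me mp ρe ρp ≤ energy ke kp q G me mp σe σp) →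
        energy ke kp q G me mp ρe ρp ≤ e :=
  stmt8_general ke kp q G me mp hq hG hme hmp hGp hGe Ne Np hNe hNp hlow hhigh
end
end

section
/- Let A, B, E, F > 0 with AE > BF. Then: (i) the function H(k) = F k^{5/3} + A k − E k^{2/3} − B has exactly one root k* in (0, ∞), and k* < E/F; (ii) the radial system Δ(u^{2/3}) = −A v + B u, Δ(v^{2/3}) = −E u + F v on ℝ³ admits a nontrivial solution pair (u, v) of radially symmetric, nonincreasing, nonnegative functions, one of which is a constant positive multiple of the other, and both have compact support (the system reduces to a Lane–Emden equation of index 3/2 with negative right-hand-side coefficient). -/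
/-!
(i) With `k = t³`, `H` becomes the quintic `F t⁵ + A t³ - E t² - B`. It is negative at `0` and
positive for large `t`, and `(F t⁵ + A t³ - B) / t²` is strictly increasing, so there is exactly
one positive root; on it `t² (F t³ - E) = B - A t³`, and `A E > B F` forces `F t³ < E`.

(ii) Look for `u = s³ v`. Both equations reduce to `Δ(v^{2/3}) = -σ v` with `σ = E s³ - F`,
provided `E s⁵ + B s³ - F s² - A = 0`, a quintic of the same shape whose root has `σ > 0`.
Then `v(r) = W(√σ r)^{3/2}`, where `W` solves the Lane–Emden equation `W'' + 2W'/r = -W^{3/2}`,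
`W(0) = 1`, `W'(0) = 0`, up to its first zero. Writing `W = 1 - P h` with `P` the radial Newton
potential (`Δ(P h) = h`), the source `h` is a fixed point of `h ↦ g (1 - P h)` with `g` the
truncation of `x ^ {3/2}` to `[0, 1]`; this map contracts an exponentially weighted sup norm.
`W` does reach zero: while `W > 0` we have `h ≥ W²`, which forces `W(r) ≳ 1/r` and then
`P h(r) ≳ log r`.
-/

open Set Filter Topology
open scoped NNReal
noncomputable section

/- `radialMean h r = r⁻³ ∫₀^r t² h t` and `radialPotential h` is the radial solution of
`Δ(P h) = h` with `P h 0 = (P h)' 0 = 0`, written so that no division by `r` occurs. -/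
def radialMean (h : ℝ → ℝ) (r : ℝ) : ℝ := ∫ s in (0:ℝ)..1, s ^ 2 * h (r * s)

def radialPotential (h : ℝ → ℝ) (r : ℝ) : ℝ := ∫ t in (0:ℝ)..r, t * radialMean h t

section RadialPotential

variable {h : ℝ → ℝ}

theorem continuous_radialMean (hh : Continuous h) : Continuous (radialMean h) :=
  intervalIntegral.continuous_parametric_intervalIntegral_of_continuous' (by fun_prop) 0 1

theorem radialMean_zero : radialMean h 0 = h 0 / 3 := by
  simp only [radialMean, zero_mul, intervalIntegral.integral_mul_const, integral_pow]
  ring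

theorem cube_mul_radialMean (r : ℝ) :
    r ^ 3 * radialMean h r = ∫ t in (0:ℝ)..r, t ^ 2 * h t := by
  rcases eq_or_ne r 0 with rfl | hr
  · simp
  have := intervalIntegral.integral_comp_mul_left (a := 0) (b := 1) (fun t => t ^ 2 * h t) hr
  simp only [mul_zero, mul_one, smul_eq_mul] at this
  rw [← mul_inv_cancel_left₀ hr (∫ t in (0:ℝ)..r, t ^ 2 * h t), ← this, radialMean,
    ← intervalIntegral.integral_const_mul, ← intervalIntegral.integral_const_mul]
  congr 1; ext s; ring

theorem hasDerivAt_mul_radialMean (hh : Continuous h) (r : ℝ) :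
    HasDerivAt (fun t => t * radialMean h t) (h r - 2 * radialMean h r) r := by
  rcases eq_or_ne r 0 with rfl | hr
  · rw [hasDerivAt_iff_tendsto_slope, radialMean_zero,
      show h 0 - 2 * (h 0 / 3) = radialMean h 0 by rw [radialMean_zero]; ring]
    refine ((continuous_radialMean hh).tendsto 0).mono_left nhdsWithin_le_nhds |>.congr' ?_
    filter_upwards [self_mem_nhdsWithin] with t ht
    simp [slope_def_field, mul_div_cancel_left₀ _ (show t ≠ 0 from ht)]
  · have hQ : HasDerivAt (fun t => (∫ s in (0:ℝ)..t, s ^ 2 * h s) / t ^ 2)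
        ((r ^ 2 * h r * r ^ 2 - (∫ s in (0:ℝ)..r, s ^ 2 * h s) * (2 * r)) / (r ^ 2) ^ 2) r := by
      refine ((((continuous_pow 2).mul hh).integral_hasStrictDerivAt 0 r).hasDerivAt.div
        ?_ (pow_ne_zero 2 hr))
      simpa using hasDerivAt_pow 2 r
    have heq : (fun t => t * radialMean h t) =ᶠ[𝓝 r]
        fun t => (∫ s in (0:ℝ)..t, s ^ 2 * h s) / t ^ 2 := by
      filter_upwards [isOpen_ne.mem_nhds hr] with t ht
      rw [← cube_mul_radialMean]; field_simp
    refine (hQ.congr_of_eventuallyEq heq).congr_deriv ?_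
    rw [← cube_mul_radialMean]; field_simp

theorem hasDerivAt_radialPotential (hh : Continuous h) (r : ℝ) :
    HasDerivAt (radialPotential h) (r * radialMean h r) r :=
  (continuous_id.mul (continuous_radialMean hh)).integral_hasStrictDerivAt 0 r |>.hasDerivAt

theorem deriv_radialPotential (hh : Continuous h) :
    deriv (radialPotential h) = fun r => r * radialMean h r :=
  funext fun r => (hasDerivAt_radialPotential hh r).deriv

theorem contDiff_radialPotential (hh : Continuous h) : ContDiff ℝ 2 (radialPotential h) := by
  rw [show (2 : WithTop ℕ∞) = 1 + 1 from rfl, contDiff_succ_iff_deriv, deriv_radialPotential hh,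
    contDiff_one_iff_deriv]
  refine ⟨fun r => (hasDerivAt_radialPotential hh r).differentiableAt, by simp,
    fun r => (hasDerivAt_mul_radialMean hh r).differentiableAt, ?_⟩
  rw [funext fun r => (hasDerivAt_mul_radialMean hh r).deriv]
  exact hh.sub (continuous_const.mul (continuous_radialMean hh))

theorem radialPotential_laplacian (hh : Continuous h) {r : ℝ} (hr : r ≠ 0) :
    deriv (deriv (radialPotential h)) r + 2 / r * deriv (radialPotential h) r = h r := by
  rw [deriv_radialPotential hh, (hasDerivAt_mul_radialMean hh r).deriv]
  field_simp; ring

theorem radialMean_nonneg (h0 : ∀ t, 0 ≤ h t) (r : ℝ) : 0 ≤ radialMean h r :=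
  intervalIntegral.integral_nonneg zero_le_one fun s _ => mul_nonneg (sq_nonneg s) (h0 _)

theorem radialMean_le (hh : Continuous h) (h1 : ∀ t, h t ≤ 1) (r : ℝ) :
    radialMean h r ≤ 1 / 3 := by
  calc radialMean h r ≤ ∫ s in (0:ℝ)..1, s ^ 2 :=
        intervalIntegral.integral_mono_on zero_le_one
          (Continuous.intervalIntegrable (by fun_prop) _ _)
          (Continuous.intervalIntegrable (by fun_prop) _ _) fun s _ =>
          mul_le_of_le_one_right (sq_nonneg s) (h1 _)
    _ = 1 / 3 := by norm_num [integral_pow]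

theorem radialPotential_nonneg (h0 : ∀ t, 0 ≤ h t) {r : ℝ} (hr : 0 ≤ r) :
    0 ≤ radialPotential h r :=
  intervalIntegral.integral_nonneg hr fun t ht => mul_nonneg ht.1 (radialMean_nonneg h0 t)

theorem radialPotential_le (hh : Continuous h) (h1 : ∀ t, h t ≤ 1) {r : ℝ} (hr : 0 ≤ r) :
    radialPotential h r ≤ r ^ 2 / 6 := by
  calc radialPotential h r ≤ ∫ t in (0:ℝ)..r, t / 3 :=
        intervalIntegral.integral_mono_on hr
          ((continuous_id.mul (continuous_radialMean hh)).intervalIntegrable _ _)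
          (Continuous.intervalIntegrable (by fun_prop) _ _)
          fun t ht => by nlinarith [ht.1, radialMean_le hh h1 t]
    _ = r ^ 2 / 6 := by
      simp only [div_eq_mul_inv, intervalIntegral.integral_mul_const, integral_id]; ring

theorem monotoneOn_radialPotential (hh : Continuous h) (h0 : ∀ t, 0 ≤ h t) :
    MonotoneOn (radialPotential h) (Ici 0) := by
  refine monotoneOn_of_deriv_nonneg (convex_Ici 0)
    (contDiff_radialPotential hh).continuous.continuousOn
    (fun r _ => (hasDerivAt_radialPotential hh r).differentiableAt.differentiableWithinAt)
    fun r hr => ?_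
  rw [interior_Ici] at hr
  rw [(hasDerivAt_radialPotential hh r).deriv]
  exact mul_nonneg (le_of_lt hr) (radialMean_nonneg h0 r)

theorem radialPotential_sub_eq_integral (hh : Continuous h) (a b : ℝ) :
    radialPotential h b - radialPotential h a = ∫ t in a..b, t * radialMean h t :=
  intervalIntegral.integral_interval_sub_left
    ((continuous_id.mul (continuous_radialMean hh)).intervalIntegrable _ _)
    ((continuous_id.mul (continuous_radialMean hh)).intervalIntegrable _ _)

theorem radialPotential_sub {h₁ h₂ : ℝ → ℝ} (hh₁ : Continuous h₁) (hh₂ : Continuous h₂) :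
    radialPotential (h₁ - h₂) = radialPotential h₁ - radialPotential h₂ := by
  have hM : radialMean (h₁ - h₂) = radialMean h₁ - radialMean h₂ := by
    ext r
    simp only [radialMean, Pi.sub_apply, mul_sub]
    exact intervalIntegral.integral_sub (Continuous.intervalIntegrable (by fun_prop) _ _)
      (Continuous.intervalIntegrable (by fun_prop) _ _)
  ext r
  simp only [radialPotential, hM, Pi.sub_apply, mul_sub]
  exact intervalIntegral.integral_sub
    ((continuous_id.mul (continuous_radialMean hh₁)).intervalIntegrable _ _)
    ((continuous_id.mul (continuous_radialMean hh₂)).intervalIntegrable _ _)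

theorem integral_exp_mul_le {κ : ℝ} (hκ : 0 < κ) (r : ℝ) :
    ∫ t in (0:ℝ)..r, Real.exp (κ * t) ≤ Real.exp (κ * r) / κ := by
  rw [intervalIntegral.integral_comp_mul_left (fun t => Real.exp t) hκ.ne', integral_exp,
    mul_zero, Real.exp_zero, smul_eq_mul, inv_mul_eq_div]
  gcongr; linarith

theorem abs_radialMean_le {κ C t : ℝ} (hκ : 0 ≤ κ) (ht : 0 ≤ t)
    (hb : ∀ s ∈ Icc 0 t, |h s| ≤ C * Real.exp (κ * s)) :
    |radialMean h t| ≤ C * Real.exp (κ * t) := by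
  have hC : 0 ≤ C :=
    nonneg_of_mul_nonneg_left ((abs_nonneg _).trans (hb 0 ⟨le_rfl, ht⟩)) (Real.exp_pos _)
  have := intervalIntegral.norm_integral_le_of_norm_le_const (a := 0) (b := 1)
    (f := fun s => s ^ 2 * h (t * s)) (C := C * Real.exp (κ * t)) fun s hs => by
      rw [uIoc_of_le zero_le_one] at hs
      have hts : t * s ∈ Icc 0 t := ⟨mul_nonneg ht hs.1.le, mul_le_of_le_one_right ht hs.2⟩
      rw [Real.norm_eq_abs, abs_mul, abs_of_nonneg (sq_nonneg s)]
      calc s ^ 2 * |h (t * s)| ≤ 1 * (C * Real.exp (κ * (t * s))) :=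
            mul_le_mul (by nlinarith [hs.1, hs.2]) (hb _ hts) (abs_nonneg _) zero_le_one
        _ ≤ C * Real.exp (κ * t) := by
            rw [one_mul]; gcongr; exact hts.2
  simpa [radialMean] using this

theorem abs_radialPotential_le {κ C r : ℝ} (hκ : 0 < κ) (hr : 0 ≤ r) (hh : Continuous h)
    (hb : ∀ t ∈ Icc 0 r, |h t| ≤ C * Real.exp (κ * t)) :
    |radialPotential h r| ≤ r * C * Real.exp (κ * r) / κ := by
  have hC : 0 ≤ C :=
    nonneg_of_mul_nonneg_left ((abs_nonneg _).trans (hb 0 ⟨le_rfl, hr⟩)) (Real.exp_pos _)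
  have hM : ∀ t ∈ Icc 0 r, |t * radialMean h t| ≤ r * (C * Real.exp (κ * t)) := fun t ht => by
    rw [abs_mul, abs_of_nonneg ht.1]
    exact mul_le_mul ht.2 (abs_radialMean_le hκ.le ht.1 fun s hs => hb s ⟨hs.1, hs.2.trans ht.2⟩)
      (abs_nonneg _) hr
  calc |radialPotential h r| ≤ ∫ t in (0:ℝ)..r, r * (C * Real.exp (κ * t)) :=
        (intervalIntegral.abs_integral_le_integral_abs hr).trans
          (intervalIntegral.integral_mono_on hr
            (((continuous_id.mul (continuous_radialMean hh)).abs).intervalIntegrable _ _)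
            (Continuous.intervalIntegrable (by fun_prop) _ _) hM)
    _ ≤ r * (C * (Real.exp (κ * r) / κ)) := by
        rw [intervalIntegral.integral_const_mul, intervalIntegral.integral_const_mul]
        gcongr
        exact integral_exp_mul_le hκ r
    _ = r * C * Real.exp (κ * r) / κ := by ring

end RadialPotential

section FixedPoint

variable {g : ℝ → ℝ} {K : ℝ≥0} {T : ℝ}

def weightedSource (hT : 0 ≤ T) (κ : ℝ) (φ : C(Icc (0:ℝ) T, ℝ)) : ℝ → ℝ :=
  IccExtend hT fun x => Real.exp (κ * x) * φ x

theorem continuous_weightedSource (hT : 0 ≤ T) (κ : ℝ) (φ : C(Icc (0:ℝ) T, ℝ)) :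
    Continuous (weightedSource hT κ φ) :=
  continuous_IccExtend_iff.2 (by fun_prop)

theorem abs_weightedSource_sub_le (hT : 0 ≤ T) (κ : ℝ) (φ ψ : C(Icc (0:ℝ) T, ℝ)) {t : ℝ}
    (ht : t ∈ Icc 0 T) :
    |weightedSource hT κ φ t - weightedSource hT κ ψ t| ≤ dist φ ψ * Real.exp (κ * t) := by
  simp only [weightedSource, IccExtend_of_mem hT _ ht, ← mul_sub, abs_mul, Real.abs_exp]
  rw [mul_comm]
  gcongr
  exact ContinuousMap.dist_apply_le_dist (f := φ) (g := ψ) ⟨t, ht⟩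

/-- A fixed point `φ` gives the source `h = e^{κ x} φ` with `h = g (1 - P h)` on `[0, T]`; the
weight `e^{-κ x}` makes the map a contraction on all of `[0, T]`. -/
def weightedPicard (hg : LipschitzWith K g) (hT : 0 ≤ T) (κ : ℝ) (φ : C(Icc (0:ℝ) T, ℝ)) :
    C(Icc (0:ℝ) T, ℝ) where
  toFun x := Real.exp (-(κ * x)) *
    g (1 - radialPotential (weightedSource hT κ φ) x)
  continuous_toFun := by
    have := (contDiff_radialPotential (continuous_weightedSource hT κ φ)).continuous
    have := hg.continuous
    fun_prop

theorem dist_weightedPicard_le (hg : LipschitzWith K g) (hT : 0 ≤ T) (φ ψ : C(Icc (0:ℝ) T, ℝ)) :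
    dist (weightedPicard hg hT (2 * K * T + 1) φ) (weightedPicard hg hT (2 * K * T + 1) ψ)
      ≤ 2⁻¹ * dist φ ψ := by
  set κ : ℝ := 2 * K * T + 1
  have hκ : 0 < κ := by positivity
  refine (ContinuousMap.dist_le (by positivity)).2 fun x => ?_
  obtain ⟨x, hx0, hxT⟩ := x
  have hφ := continuous_weightedSource hT κ φ
  have hψ := continuous_weightedSource hT κ ψ
  have hP := abs_radialPotential_le hκ hx0 (hφ.sub hψ) fun t ht =>
    abs_weightedSource_sub_le hT κ φ ψ ⟨ht.1, ht.2.trans hxT⟩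
  rw [radialPotential_sub hφ hψ, Pi.sub_apply] at hP
  have hg' := hg.dist_le_mul (1 - radialPotential (weightedSource hT κ φ) x)
    (1 - radialPotential (weightedSource hT κ ψ) x)
  rw [Real.dist_eq, Real.dist_eq, sub_sub_sub_cancel_left,
    abs_sub_comm (radialPotential _ x)] at hg'
  simp only [weightedPicard, ContinuousMap.coe_mk, Real.dist_eq, ← mul_sub, abs_mul, Real.abs_exp]
  calc Real.exp (-(κ * x)) * |g (1 - radialPotential (weightedSource hT κ φ) x) -
        g (1 - radialPotential (weightedSource hT κ ψ) x)|
      ≤ Real.exp (-(κ * x)) * (K * (x * dist φ ψ * Real.exp (κ * x) / κ)) := by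
        gcongr
        exact hg'.trans (by gcongr)
    _ = K * x * dist φ ψ / κ := by
      rw [Real.exp_neg]; field_simp
    _ ≤ 2⁻¹ * dist φ ψ := by
      rw [div_le_iff₀ hκ]
      have : (K : ℝ) * x ≤ K * T := by gcongr
      nlinarith [dist_nonneg (x := φ) (y := ψ)]

theorem exists_eq_comp_one_sub_radialPotential (hg : LipschitzWith K g) (hT : 0 ≤ T) :
    ∃ h : ℝ → ℝ, Continuous h ∧ range h ⊆ range g ∧
      ∀ r ∈ Icc 0 T, h r = g (1 - radialPotential h r) := by
  set κ : ℝ := 2 * K * T + 1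
  have hF : ContractingWith 2⁻¹ (weightedPicard hg hT κ) :=
    ⟨by rw [← NNReal.coe_lt_coe]; norm_num,
      LipschitzWith.of_dist_le_mul fun φ ψ => by
        simpa using dist_weightedPicard_le hg hT φ ψ⟩
  set φ := ContractingWith.fixedPoint _ hF
  have hφ : ∀ x : Icc (0:ℝ) T, Real.exp (κ * x) * φ x =
      g (1 - radialPotential (weightedSource hT κ φ) x) := fun x => by
    have hfix : weightedPicard hg hT κ φ = φ := ContractingWith.fixedPoint_isFixedPt hF
    conv_lhs => rw [← hfix]
    simp [weightedPicard, ← mul_assoc, ← Real.exp_add]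
  refine ⟨weightedSource hT κ φ, continuous_weightedSource hT κ φ, ?_, fun r hr => ?_⟩
  · rintro _ ⟨r, rfl⟩
    exact ⟨_, (hφ _).symm⟩
  · rw [weightedSource, IccExtend_of_mem hT _ hr]
    exact hφ ⟨r, hr⟩

end FixedPoint

section Divergence

variable {h : ℝ → ℝ}

theorem integral_inv_sq {a b : ℝ} (ha : 0 < a) (hab : a ≤ b) :
    ∫ t in a..b, (t ^ 2)⁻¹ = a⁻¹ - b⁻¹ := by
  have hz := integral_zpow (a := a) (b := b) (n := -2)
    (Or.inr ⟨by norm_num, by rw [uIcc_of_le hab]; exact fun h => (h.1.trans_lt' ha).false⟩)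
  norm_num at hz
  rw [hz]; ring

theorem cube_mul_radialMean_sub (hh : Continuous h) (a b : ℝ) :
    b ^ 3 * radialMean h b - a ^ 3 * radialMean h a = ∫ t in a..b, t ^ 2 * h t := by
  rw [cube_mul_radialMean, cube_mul_radialMean]
  exact intervalIntegral.integral_interval_sub_left
    (Continuous.intervalIntegrable (by fun_prop) _ _)
    (Continuous.intervalIntegrable (by fun_prop) _ _)

theorem cube_mul_radialMean_mono (hh : Continuous h) (h0 : ∀ t, 0 ≤ h t) {a b : ℝ} (hab : a ≤ b) :
    a ^ 3 * radialMean h a ≤ b ^ 3 * radialMean h b := by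
  have := cube_mul_radialMean_sub hh a b
  have : 0 ≤ ∫ t in a..b, t ^ 2 * h t :=
    intervalIntegral.integral_nonneg hab fun t _ => mul_nonneg (sq_nonneg t) (h0 t)
  linarith

theorem integral_le_radialPotential_sub (hh : Continuous h) {f : ℝ → ℝ} {a b : ℝ} (hab : a ≤ b)
    (hf : IntervalIntegrable f MeasureTheory.volume a b)
    (hle : ∀ t ∈ Icc a b, f t ≤ t * radialMean h t) :
    ∫ t in a..b, f t ≤ radialPotential h b - radialPotential h a := by
  rw [radialPotential_sub_eq_integral hh]
  exact intervalIntegral.integral_mono_on hab hf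
    ((continuous_id.mul (continuous_radialMean hh)).intervalIntegrable _ _) hle

theorem radialMean_one_div_le_one_sub_radialPotential (hh : Continuous h) (h0 : ∀ t, 0 ≤ h t)
    {r T : ℝ} (hr : r ∈ Icc 1 (T / 2)) (hT : radialPotential h T ≤ 1) :
    radialMean h 1 / (2 * r) ≤ 1 - radialPotential h r := by
  set c := radialMean h 1
  have hr0 : 0 < r := zero_lt_one.trans_le hr.1
  have hrT : r ≤ T := by linarith [hr.2]
  have hint := integral_le_radialPotential_sub hh (f := fun t => c * (t ^ 2)⁻¹) hrT
    (continuousOn_const.mul ((continuous_pow 2).continuousOn.inv₀ fun t ht => by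
      rw [uIcc_of_le hrT] at ht; exact pow_ne_zero 2 (hr0.trans_le ht.1).ne')).intervalIntegrable
    fun t ht => by
      have ht0 : 0 < t := hr0.trans_le ht.1
      have : c ≤ t ^ 3 * radialMean h t := by
        simpa using cube_mul_radialMean_mono hh h0 (hr.1.trans ht.1)
      calc c * (t ^ 2)⁻¹ ≤ t ^ 3 * radialMean h t * (t ^ 2)⁻¹ := by gcongr
        _ = t * radialMean h t := by field_simp
  rw [intervalIntegral.integral_const_mul, integral_inv_sq hr0 hrT] at hint
  have hc0 : 0 ≤ c := radialMean_nonneg h0 1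
  have : (2 * r)⁻¹ ≤ r⁻¹ - T⁻¹ := by
    have : T⁻¹ ≤ (2 * r)⁻¹ := inv_anti₀ (by positivity) (by linarith [hr.2])
    rw [mul_inv] at this ⊢
    linarith
  rw [div_eq_mul_inv]
  nlinarith

theorem le_radialMean_one (hh : Continuous h) {c : ℝ} (hc : ∀ s ∈ Icc 0 1, c ≤ h s) :
    c / 3 ≤ radialMean h 1 := by
  have : ∫ s in (0:ℝ)..1, s ^ 2 * c ≤ radialMean h 1 :=
    intervalIntegral.integral_mono_on zero_le_one (Continuous.intervalIntegrable (by fun_prop) _ _)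
      (Continuous.intervalIntegrable (by fun_prop) _ _) fun s hs => by
        rw [one_mul]; exact mul_le_mul_of_nonneg_left (hc s hs) (sq_nonneg s)
  rw [intervalIntegral.integral_mul_const, integral_pow] at this
  linarith

theorem sub_one_mul_le_cube_mul_radialMean (hh : Continuous h) (h0 : ∀ t, 0 ≤ h t) {c s : ℝ}
    (hs : 1 ≤ s) (hlow : ∀ t ∈ Icc 1 s, c ≤ t ^ 2 * h t) :
    (s - 1) * c ≤ s ^ 3 * radialMean h s := by
  have hsub := cube_mul_radialMean_sub hh 1 s
  have hint : ∫ _ in (1:ℝ)..s, c ≤ ∫ t in (1:ℝ)..s, t ^ 2 * h t :=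
    intervalIntegral.integral_mono_on hs intervalIntegrable_const
      (Continuous.intervalIntegrable (by fun_prop) _ _) hlow
  rw [intervalIntegral.integral_const, smul_eq_mul] at hint
  linarith [radialMean_nonneg h0 1]

theorem mul_log_le_radialPotential_sub (hh : Continuous h) {c a b : ℝ} (ha : 0 < a) (hab : a ≤ b)
    (hQ : ∀ t ∈ Icc a b, c * t ≤ t ^ 3 * radialMean h t) :
    c * Real.log (b / a) ≤ radialPotential h b - radialPotential h a := by
  have h0 : (0:ℝ) ∉ uIcc a b := by
    rw [uIcc_of_le hab]; exact fun h => (h.1.trans_lt' ha).false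
  rw [← integral_inv h0, ← intervalIntegral.integral_const_mul]
  refine integral_le_radialPotential_sub hh hab
    (continuousOn_const.mul (continuousOn_inv₀.mono fun t ht => ne_of_mem_of_not_mem ht h0)
      |>.intervalIntegrable) fun t ht => ?_
  have ht0 : 0 < t := ha.trans_le ht.1
  calc c * t⁻¹ = c * t * (t ^ 2)⁻¹ := by field_simp
    _ ≤ t ^ 3 * radialMean h t * (t ^ 2)⁻¹ := mul_le_mul_of_nonneg_right (hQ t ht) (by positivity)
    _ = t * radialMean h t := by field_simp

/-- `4 e²⁸⁸` is where the lower bound `log (T / 4) / 288` for `P h (T / 2) - P h 2` reaches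
`1`. -/
theorem one_le_radialPotential (hh : Continuous h) (h0 : ∀ t, 0 ≤ h t) (h1 : ∀ t, h t ≤ 1)
    {T : ℝ} (hT : 4 * Real.exp 288 ≤ T)
    (hsq : ∀ r ∈ Icc 0 T, radialPotential h r < 1 → (1 - radialPotential h r) ^ 2 ≤ h r) :
    1 ≤ radialPotential h T := by
  by_contra! hPT
  have hT0 : 0 ≤ T := (by positivity : (0:ℝ) ≤ 4 * Real.exp 288).trans hT
  have hexp : 2 ≤ Real.exp 288 := by linarith [Real.add_one_le_exp (288:ℝ)]
  have hsq' : ∀ r ∈ Icc 0 T, (1 - radialPotential h r) ^ 2 ≤ h r := fun r hr =>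
    hsq r hr ((monotoneOn_radialPotential hh h0 hr.1 (mem_Ici.2 hT0) hr.2).trans_lt hPT)
  have hM1 : 1 / 6 ≤ radialMean h 1 := by
    have := le_radialMean_one hh (c := 1 / 2) fun s hs => by
      have hP := radialPotential_le hh h1 hs.1
      have hP0 := radialPotential_nonneg h0 hs.1
      nlinarith [hsq' s ⟨hs.1, by linarith [hs.2]⟩, pow_le_one₀ hs.1 hs.2 (n := 2)]
    linarith
  have hlow : ∀ t ∈ Icc 1 (T / 2), 1 / 144 ≤ t ^ 2 * h t := fun t ht => by
    have ht0 : 0 < t := zero_lt_one.trans_le ht.1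
    have hW := radialMean_one_div_le_one_sub_radialPotential hh h0 ht hPT.le
    have h12 : 1 / (12 * t) ≤ 1 - radialPotential h t :=
      (div_le_div_of_nonneg_right hM1 (by positivity)).trans' (by field_simp; norm_num) |>.trans hW
    have := hsq' t ⟨ht0.le, by linarith [ht.2]⟩
    calc 1 / 144 = t ^ 2 * (1 / (12 * t)) ^ 2 := by field_simp; norm_num
      _ ≤ t ^ 2 * h t := by gcongr; exact (pow_le_pow_left₀ (by positivity) h12 2).trans this
  have hlog := mul_log_le_radialPotential_sub hh (c := 1 / 288) two_pos
    (by linarith : (2:ℝ) ≤ T / 2) fun t ht => by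
      have := sub_one_mul_le_cube_mul_radialMean hh h0 (one_le_two.trans ht.1)
        fun s hs => hlow s ⟨hs.1, hs.2.trans ht.2⟩
      nlinarith [ht.1]
  have hlogT : 288 ≤ Real.log (T / 2 / 2) := by
    rw [Real.le_log_iff_exp_le (by linarith)]; linarith
  linarith [radialPotential_nonneg h0 (zero_le_two : (0:ℝ) ≤ 2),
    monotoneOn_radialPotential hh h0 (mem_Ici.2 (by linarith : (0:ℝ) ≤ T / 2)) (mem_Ici.2 hT0)
      (by linarith : T / 2 ≤ T)]

end Divergence

/-- Truncating to `[0, 1]` makes `x ↦ x ^ p` bounded and, for `1 ≤ p`, globally Lipschitz. -/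
def truncRpow (p : ℝ) : ℝ → ℝ := IccExtend zero_le_one fun x : Icc (0:ℝ) 1 => (x : ℝ) ^ p

section TruncRpow

variable {p : ℝ}

theorem truncRpow_of_mem {x : ℝ} (hx : x ∈ Icc 0 1) : truncRpow p x = x ^ p :=
  IccExtend_of_mem _ _ hx

theorem truncRpow_mem_Icc (hp : 0 ≤ p) (x : ℝ) : truncRpow p x ∈ Icc 0 1 := by
  obtain ⟨hy0, hy1⟩ := (projIcc (0:ℝ) 1 zero_le_one x).2
  exact ⟨Real.rpow_nonneg hy0 p, Real.rpow_le_one hy0 hy1 hp⟩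

theorem sq_le_truncRpow (hp : p ≤ 2) {x : ℝ} (hx0 : 0 < x) (hx1 : x ≤ 1) :
    x ^ 2 ≤ truncRpow p x := by
  rw [truncRpow_of_mem ⟨hx0.le, hx1⟩, ← Real.rpow_natCast]
  exact Real.rpow_le_rpow_of_exponent_ge hx0 hx1 (by norm_num [hp])

theorem exists_lipschitzWith_truncRpow (hp : 1 ≤ p) : ∃ K, LipschitzWith K (truncRpow p) := by
  obtain ⟨K, hK⟩ := ((Real.contDiff_rpow_const_of_le (n := 1) (by simpa using hp)).contDiffOn
    (s := Icc (0:ℝ) 1)).exists_lipschitzOnWith one_ne_zero (convex_Icc 0 1) isCompact_Icc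
  exact ⟨K * 1, hK.to_restrict.comp (LipschitzWith.projIcc zero_le_one)⟩

end TruncRpow

theorem exists_threshold_of_monotoneOn {f : ℝ → ℝ} (hf : Continuous f)
    (hmono : MonotoneOn f (Ici 0)) {c T : ℝ} (hT0 : 0 ≤ T) (h0 : f 0 < c) (hT : c ≤ f T) :
    ∃ R ∈ Ioc 0 T, (∀ r ∈ Ico 0 R, f r < c) ∧ ∀ r, R ≤ r → c ≤ f r := by
  obtain ⟨R, ⟨⟨hR0, hRT⟩, hcR⟩, hleast⟩ :=
    (isCompact_Icc.inter_right (isClosed_le continuous_const hf)).exists_isLeast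
      ⟨T, ⟨hT0, le_rfl⟩, hT⟩
  refine ⟨R, ⟨hR0.lt_of_ne ?_, hRT⟩, fun r hr => ?_,
    fun r hr => hcR.trans (hmono hR0 (hR0.trans hr) hr)⟩
  · rintro rfl; exact (h0.trans_le hcR).false
  · by_contra! hcr
    exact absurd (hleast ⟨⟨hr.1, hr.2.le.trans hRT⟩, hcr⟩) (not_le.2 hr.2)

theorem exists_laneEmden {p : ℝ} (hp1 : 1 ≤ p) (hp2 : p ≤ 2) :
    ∃ W : ℝ → ℝ, ∃ R > 0, ContDiff ℝ 2 W ∧ deriv W 0 = 0 ∧ AntitoneOn W (Ici 0) ∧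
      (∀ r ∈ Ico 0 R, 0 < W r) ∧ (∀ r, R ≤ r → W r ≤ 0) ∧
      ∀ r ∈ Ioo 0 R, deriv (deriv W) r + 2 / r * deriv W r = -W r ^ p := by
  obtain ⟨K, hK⟩ := exists_lipschitzWith_truncRpow hp1
  set T := 4 * Real.exp 288
  have hT : 0 ≤ T := by positivity
  obtain ⟨h, hh, hrange, hfix⟩ := exists_eq_comp_one_sub_radialPotential hK hT
  have hmem : ∀ t, h t ∈ Icc 0 1 := fun t => by
    obtain ⟨x, hx⟩ := hrange ⟨t, rfl⟩
    exact hx ▸ truncRpow_mem_Icc (by linarith) x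
  have h0 : ∀ t, 0 ≤ h t := fun t => (hmem t).1
  have hsource : ∀ r ∈ Icc 0 T, radialPotential h r < 1 →
      h r = (1 - radialPotential h r) ^ p := fun r hr hlt => by
    rw [hfix r hr, truncRpow_of_mem ⟨by linarith, by linarith [radialPotential_nonneg h0 hr.1]⟩]
  have hmono := monotoneOn_radialPotential hh h0
  obtain ⟨R, ⟨hR0, hRT⟩, hbelow, habove⟩ := exists_threshold_of_monotoneOn
    (contDiff_radialPotential hh).continuous hmono hT (by simp [radialPotential])
    (one_le_radialPotential hh h0 (fun t => (hmem t).2) le_rfl fun r hr hlt => by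
      rw [hsource r hr hlt]
      exact (sq_le_truncRpow hp2 (by linarith) (by linarith [radialPotential_nonneg h0 hr.1])).trans
        (truncRpow_of_mem ⟨by linarith, by linarith [radialPotential_nonneg h0 hr.1]⟩).le)
  have hderiv : deriv (fun r => 1 - radialPotential h r) = fun r => -deriv (radialPotential h) r :=
    funext fun r => deriv_const_sub 1
  refine ⟨fun r => 1 - radialPotential h r, R, hR0,
    contDiff_const.sub (contDiff_radialPotential hh), by simp [hderiv, deriv_radialPotential hh],
    fun a ha b hb hab => sub_le_sub_left (hmono ha hb hab) 1,
    fun r hr => by simpa using hbelow r hr, fun r hr => by simpa using habove r hr,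
    fun r hr => ?_⟩
  have hlap := radialPotential_laplacian hh hr.1.ne'
  rw [hsource r ⟨hr.1.le, hr.2.le.trans hRT⟩ (hbelow r ⟨hr.1.le, hr.2⟩)] at hlap
  have hneg : deriv (fun r => -deriv (radialPotential h) r) r =
      -deriv (deriv (radialPotential h)) r := deriv.neg
  rw [hderiv, hneg]
  linarith

theorem laplacian_comp_const_mul (W : ℝ → ℝ) {γ r : ℝ} (hγ : γ ≠ 0) (hr : r ≠ 0) :
    deriv (deriv fun s => W (γ * s)) r + 2 / r * deriv (fun s => W (γ * s)) r =
      γ ^ 2 * (deriv (deriv W) (γ * r) + 2 / (γ * r) * deriv W (γ * r)) := by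
  have h1 : deriv (fun s => W (γ * s)) = fun s => γ * deriv W (γ * s) :=
    funext fun s => deriv_comp_mul_left γ W s
  simp only [h1, deriv_const_mul_field', deriv_comp_mul_left, smul_eq_mul]
  field_simp

structure IsLaneEmdenProfile (q σ R : ℝ) (u : ℝ → ℝ) : Prop where
  nonneg : ∀ r, 0 ≤ u r
  antitoneOn : AntitoneOn u (Ici 0)
  continuous : Continuous u
  pos : ∀ r ∈ Ico 0 R, 0 < u r
  eq_zero : ∀ r, R ≤ r → u r = 0
  contDiffOn : ContDiffOn ℝ 2 u (Ico 0 R)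
  contDiffOn_rpow : ContDiffOn ℝ 2 (fun r => u r ^ q) (Ico 0 R)
  derivWithin_rpow_zero : derivWithin (fun r => u r ^ q) (Ico 0 R) 0 = 0
  laplacian : ∀ r ∈ Ioo 0 R,
    deriv (deriv fun s => u s ^ q) r + 2 / r * deriv (fun s => u s ^ q) r = -σ * u r

namespace IsLaneEmdenProfile

variable {q σ R : ℝ} {u : ℝ → ℝ}

theorem const_mul (hu : IsLaneEmdenProfile q σ R u) {a : ℝ} (ha : 0 < a) :
    IsLaneEmdenProfile q (a ^ q / a * σ) R fun r => a * u r := by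
  have hrpow : (fun r => (a * u r) ^ q) = fun r => a ^ q * u r ^ q :=
    funext fun r => Real.mul_rpow ha.le (hu.nonneg r)
  refine ⟨fun r => mul_nonneg ha.le (hu.nonneg r),
    fun x hx y hy hxy => mul_le_mul_of_nonneg_left (hu.antitoneOn hx hy hxy) ha.le,
    continuous_const.mul hu.continuous, fun r hr => mul_pos ha (hu.pos r hr),
    fun r hr => by simp [hu.eq_zero r hr], contDiffOn_const.mul hu.contDiffOn,
    hrpow ▸ contDiffOn_const.mul hu.contDiffOn_rpow, ?_, fun r hr => ?_⟩
  · rw [hrpow, derivWithin_const_mul_field, hu.derivWithin_rpow_zero, mul_zero]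
  · rw [hrpow, deriv_const_mul_field', deriv_const_mul_field']
    calc a ^ q * deriv (deriv fun s => u s ^ q) r + 2 / r * (a ^ q * deriv (fun s => u s ^ q) r)
        = a ^ q * (-σ * u r) := by rw [← hu.laplacian r hr]; ring
      _ = -(a ^ q / a * σ) * (a * u r) := by field_simp

end IsLaneEmdenProfile

/-- Rescaling `r ↦ γ r` with `γ = √σ` turns the Lane–Emden profile `W` of index `p` into a
solution of `Δ(u ^ q) = -σ u` for `u = W₊ ^ p`. -/
theorem exists_isLaneEmdenProfile {p q σ : ℝ} (hp1 : 1 ≤ p) (hp2 : p ≤ 2) (hpq : p * q = 1)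
    (hσ : 0 < σ) : ∃ R > 0, ∃ u, IsLaneEmdenProfile q σ R u := by
  obtain ⟨W, R, hR, hW2, hW0, hanti, hpos, hneg, hode⟩ := exists_laneEmden hp1 hp2
  set γ := Real.sqrt σ
  have hγ : 0 < γ := Real.sqrt_pos.2 hσ
  have hscale : ∀ r ∈ Ico 0 (R / γ), γ * r ∈ Ico 0 R := fun r hr =>
    ⟨mul_nonneg hγ.le hr.1, by rw [← lt_div_iff₀' hγ]; exact hr.2⟩
  have hWγ : ContDiff ℝ 2 fun r => W (γ * r) := hW2.comp (contDiff_const.mul contDiff_id)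
  have hrpow : ∀ r ∈ Ico 0 (R / γ), (max (W (γ * r)) 0 ^ p) ^ q = W (γ * r) := fun r hr => by
    rw [max_eq_left (hpos _ (hscale r hr)).le, ← Real.rpow_mul (hpos _ (hscale r hr)).le, hpq,
      Real.rpow_one]
  refine ⟨R / γ, div_pos hR hγ, fun r => max (W (γ * r)) 0 ^ p,
    fun r => Real.rpow_nonneg (le_max_right _ _) p,
    fun x hx y hy hxy => Real.rpow_le_rpow (le_max_right _ _)
      (max_le_max (hanti (mul_nonneg hγ.le hx) (mul_nonneg hγ.le hy) (by gcongr)) le_rfl)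
      (by linarith),
    (hWγ.continuous.max continuous_const).rpow_const fun _ => Or.inr (by linarith),
    fun r hr => Real.rpow_pos_of_pos (lt_max_of_lt_left (hpos _ (hscale r hr))) p,
    fun r hr => by
      rw [max_eq_right (hneg _ (by rwa [← div_le_iff₀' hγ])), Real.zero_rpow (by linarith)],
    fun r hr => ?_, hWγ.contDiffOn.congr hrpow, ?_, fun r hr => ?_⟩
  · have hWr := hpos _ (hscale r hr)
    refine ((hWγ.contDiffAt.rpow_const_of_ne (p := p) hWr.ne').congr_of_eventuallyEq
      ?_).contDiffWithinAt
    filter_upwards [hWγ.continuous.continuousAt.eventually (lt_mem_nhds hWr)] with s hs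
    rw [max_eq_left hs.le]
  · rw [derivWithin_congr hrpow (hrpow 0 ⟨le_rfl, div_pos hR hγ⟩),
      (hWγ.differentiable (by norm_num) 0).derivWithin
        (uniqueDiffOn_Ico _ _ 0 ⟨le_rfl, div_pos hR hγ⟩),
      deriv_comp_mul_left, mul_zero, hW0, smul_zero]
  · have hev : (fun s => (max (W (γ * s)) 0 ^ p) ^ q) =ᶠ[𝓝 r] fun s => W (γ * s) := by
      filter_upwards [isOpen_Ioo.mem_nhds hr] with s hs using hrpow s ⟨hs.1.le, hs.2⟩
    have hγr : γ * r ∈ Ioo 0 R := ⟨mul_pos hγ hr.1, (hscale r ⟨hr.1.le, hr.2⟩).2⟩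
    rw [hev.deriv.deriv_eq, hev.deriv_eq, laplacian_comp_const_mul W hγ.ne' hr.1.ne',
      hode _ hγr, Real.sq_sqrt hσ.le, max_eq_left (hpos _ ⟨hγr.1.le, hγr.2⟩).le]
    ring

section Quintic

theorem cube_rpow_div_three {x : ℝ} (hx : 0 ≤ x) (n : ℕ) : (x ^ 3) ^ ((n : ℝ) / 3) = x ^ n := by
  rw [← Real.rpow_natCast x 3, ← Real.rpow_mul hx, ← Real.rpow_natCast]
  congr 1; push_cast; ring

theorem exists_pos_cube_eq {k : ℝ} (hk : 0 < k) : ∃ t, 0 < t ∧ t ^ 3 = k :=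
  ⟨k ^ ((1:ℝ) / 3), Real.rpow_pos_of_pos hk _, by
    rw [← Real.rpow_natCast, ← Real.rpow_mul hk.le]; norm_num⟩

theorem rpow_form_cube_eq_quintic (A B E F : ℝ) {t : ℝ} (ht : 0 ≤ t) :
    F * (t ^ 3) ^ ((5:ℝ) / 3) + A * t ^ 3 - E * (t ^ 3) ^ ((2:ℝ) / 3) - B =
      F * t ^ 5 + A * t ^ 3 - E * t ^ 2 - B := by
  have h5 := cube_rpow_div_three ht 5
  have h2 := cube_rpow_div_three ht 2
  push_cast at h5 h2
  rw [h5, h2]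

variable {P Q R S : ℝ}

theorem exists_pos_quintic_eq_zero (hP : 0 < P) (hQ : 0 ≤ Q) (hS : 0 < S) :
    ∃ t, 0 < t ∧ P * t ^ 5 + Q * t ^ 3 - R * t ^ 2 - S = 0 := by
  set b := (|R| + S) / P + 1
  have hb : 1 ≤ b := by unfold b; linarith [div_nonneg (by positivity : 0 ≤ |R| + S) hP.le]
  have hPb : P * b = |R| + S + P := by unfold b; field_simp
  have hfb : 0 ≤ P * b ^ 5 + Q * b ^ 3 - R * b ^ 2 - S := by
    have hR : R * b ^ 2 ≤ |R| * b ^ 4 := mul_le_mul (le_abs_self R)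
      (pow_le_pow_right₀ hb (by norm_num)) (by positivity) (abs_nonneg R)
    have hS4 : S ≤ S * b ^ 4 := le_mul_of_one_le_right hS.le (one_le_pow₀ hb)
    have h5 : P * b ^ 5 = b ^ 4 * (|R| + S + P) := by rw [← hPb]; ring
    nlinarith [pow_nonneg (zero_le_one.trans hb) 3, pow_pos (zero_lt_one.trans_le hb) 4]
  obtain ⟨t, ⟨ht0, -⟩, ht⟩ := intermediate_value_Icc (zero_le_one.trans hb)
    (f := fun t => P * t ^ 5 + Q * t ^ 3 - R * t ^ 2 - S) (by fun_prop)
    (show (0:ℝ) ∈ Icc _ _ from ⟨by simp; linarith, hfb⟩)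
  refine ⟨t, ht0.lt_of_ne ?_, ht⟩
  rintro rfl; simp at ht; linarith

theorem eq_of_quintic_eq_zero (hP : 0 < P) (hQ : 0 < Q) (hS : 0 < S) {x y : ℝ} (hx : 0 < x)
    (hy : 0 < y) (hx0 : P * x ^ 5 + Q * x ^ 3 - R * x ^ 2 - S = 0)
    (hy0 : P * y ^ 5 + Q * y ^ 3 - R * y ^ 2 - S = 0) : x = y := by
  wlog hxy : x < y generalizing x y
  · rcases (not_lt.1 hxy).lt_or_eq with h | h
    · exact (this hy hx hy0 hx0 h).symm
    · exact h.symm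
  -- `t ↦ (P t⁵ + Q t³ - S) / t²` is strictly increasing on `t > 0`
  have key : P * (x ^ 2 * y ^ 2 * (y ^ 3 - x ^ 3)) + Q * (x ^ 2 * y ^ 2 * (y - x)) +
      S * (y ^ 2 - x ^ 2) = 0 := by
    linear_combination x ^ 2 * hy0 - y ^ 2 * hx0
  have h3 : x ^ 3 < y ^ 3 := pow_lt_pow_left₀ hxy hx.le (by norm_num)
  have h2 : x ^ 2 < y ^ 2 := pow_lt_pow_left₀ hxy hx.le (by norm_num)
  have : 0 < x ^ 2 * y ^ 2 := by positivity
  nlinarith [mul_pos hP (mul_pos this (sub_pos.2 h3)), mul_pos hQ (mul_pos this (sub_pos.2 hxy)),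
    mul_pos hS (sub_pos.2 h2)]

/- A root satisfies `t² (P t³ - R) = S - Q t³`, so `P t³ - R` and `S P - Q R` have the same
sign. -/
theorem mul_cube_lt_of_quintic_eq_zero (hP : 0 < P) (hQ : 0 ≤ Q) (h : S * P < Q * R) {t : ℝ}
    (ht : P * t ^ 5 + Q * t ^ 3 - R * t ^ 2 - S = 0) : P * t ^ 3 < R := by
  by_contra! hle
  have : Q * t ^ 3 ≤ S := by nlinarith [mul_nonneg (sq_nonneg t) (sub_nonneg.2 hle)]
  nlinarith [mul_le_mul_of_nonneg_left hle hQ, mul_le_mul_of_nonneg_right this hP.le]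

theorem lt_mul_cube_of_quintic_eq_zero (hP : 0 < P) (hQ : 0 ≤ Q) (h : Q * R < S * P) {t : ℝ}
    (ht : P * t ^ 5 + Q * t ^ 3 - R * t ^ 2 - S = 0) : R < P * t ^ 3 := by
  by_contra! hle
  have : S ≤ Q * t ^ 3 := by nlinarith [mul_nonneg (sq_nonneg t) (sub_nonneg.2 hle)]
  nlinarith [mul_le_mul_of_nonneg_left hle hQ, mul_le_mul_of_nonneg_right this hP.le]

end Quintic

theorem existsUnique_pos_rpow_eq_zero {A B E F : ℝ} (hA : 0 < A) (hB : 0 < B) (hF : 0 < F) :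
    ∃! k : ℝ, 0 < k ∧ F * k ^ ((5:ℝ) / 3) + A * k - E * k ^ ((2:ℝ) / 3) - B = 0 := by
  obtain ⟨t, ht, hroot⟩ := exists_pos_quintic_eq_zero hF hA.le hB (R := E)
  refine ⟨t ^ 3, ⟨by positivity, by rwa [rpow_form_cube_eq_quintic A B E F ht.le]⟩, ?_⟩
  rintro k ⟨hk, hkroot⟩
  obtain ⟨s, hs, rfl⟩ := exists_pos_cube_eq hk
  rw [rpow_form_cube_eq_quintic A B E F hs.le] at hkroot
  rw [eq_of_quintic_eq_zero hF hA hB hs ht hkroot hroot]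

theorem lt_div_of_rpow_eq_zero {A B E F k : ℝ} (hA : 0 < A) (hF : 0 < F) (hBF : B * F < A * E)
    (hk : 0 < k) (hroot : F * k ^ ((5:ℝ) / 3) + A * k - E * k ^ ((2:ℝ) / 3) - B = 0) :
    k < E / F := by
  obtain ⟨t, ht, rfl⟩ := exists_pos_cube_eq hk
  rw [rpow_form_cube_eq_quintic A B E F ht.le] at hroot
  rw [lt_div_iff₀ hF, mul_comm]
  exact mul_cube_lt_of_quintic_eq_zero hF hA.le hBF hroot

/-- Lemma 5.4 (special proportional solutions, case `d = 5`). -/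
theorem stmt12 (A B E F : ℝ) (hA : 0 < A) (hB : 0 < B) (hE : 0 < E) (hF : 0 < F)
    (hAEBF : B * F < A * E) :
    -- (i) `H(k) = F k^{5/3} + A k − E k^{2/3} − B` has exactly one positive root,
    -- and this root is `< E/F`.
    (∃! k : ℝ, 0 < k ∧
        F * k ^ ((5:ℝ)/3) + A * k - E * k ^ ((2:ℝ)/3) - B = 0) ∧
    (∀ k : ℝ, 0 < k → F * k ^ ((5:ℝ)/3) + A * k - E * k ^ ((2:ℝ)/3) - B = 0 →
      k < E / F) ∧
    -- (ii) the radial system `Δ(u^{2/3}) = −Av + Bu`, `Δ(v^{2/3}) = −Eu + Fv` has a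
    -- nontrivial pair of nonincreasing nonnegative compactly supported solutions
    -- (given by radial profiles), with `u` a constant positive multiple of `v`.
    (∃ (R c : ℝ) (u v : ℝ → ℝ), 0 < R ∧ 0 < c ∧
      (∀ r : ℝ, u r = c * v r) ∧
      (∀ r ∈ Ici (0:ℝ), 0 ≤ u r ∧ 0 ≤ v r) ∧
      AntitoneOn u (Ici 0) ∧ AntitoneOn v (Ici 0) ∧
      ContinuousOn u (Ici 0) ∧ ContinuousOn v (Ici 0) ∧
      (∀ r ∈ Ico (0:ℝ) R, 0 < u r ∧ 0 < v r) ∧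
      (∀ r : ℝ, R ≤ r → u r = 0 ∧ v r = 0) ∧
      ContDiffOn ℝ 2 u (Ico 0 R) ∧ ContDiffOn ℝ 2 v (Ico 0 R) ∧
      ContDiffOn ℝ 2 (fun r => u r ^ ((2:ℝ)/3)) (Ico 0 R) ∧
      ContDiffOn ℝ 2 (fun r => v r ^ ((2:ℝ)/3)) (Ico 0 R) ∧
      derivWithin (fun r => u r ^ ((2:ℝ)/3)) (Ico 0 R) 0 = 0 ∧
      derivWithin (fun r => v r ^ ((2:ℝ)/3)) (Ico 0 R) 0 = 0 ∧
      (∀ r ∈ Ioo (0:ℝ) R,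
        deriv (deriv (fun s => u s ^ ((2:ℝ)/3))) r
            + 2 / r * deriv (fun s => u s ^ ((2:ℝ)/3)) r
          = -A * v r + B * u r ∧
        deriv (deriv (fun s => v s ^ ((2:ℝ)/3))) r
            + 2 / r * deriv (fun s => v s ^ ((2:ℝ)/3)) r
          = -E * u r + F * v r)) := by
  refine ⟨existsUnique_pos_rpow_eq_zero hA hB hF, fun k => lt_div_of_rpow_eq_zero hA hF hAEBF, ?_⟩
  obtain ⟨s, hs, hroot⟩ := exists_pos_quintic_eq_zero hE hB.le hA (R := F)
  have hσ : 0 < E * s ^ 3 - F := sub_pos.2 (lt_mul_cube_of_quintic_eq_zero hE hB.le hAEBF hroot)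
  obtain ⟨R, hR, v, hv⟩ :=
    exists_isLaneEmdenProfile (p := 3 / 2) (q := 2 / 3) (by norm_num) (by norm_num) (by norm_num) hσ
  have hu := hv.const_mul (pow_pos hs 3)
  refine ⟨R, s ^ 3, _, v, hR, pow_pos hs 3, fun r => rfl, fun r _ => ⟨hu.nonneg r, hv.nonneg r⟩,
    hu.antitoneOn, hv.antitoneOn, hu.continuous.continuousOn, hv.continuous.continuousOn,
    fun r hr => ⟨hu.pos r hr, hv.pos r hr⟩, fun r hr => ⟨hu.eq_zero r hr, hv.eq_zero r hr⟩,
    hu.contDiffOn, hv.contDiffOn, hu.contDiffOn_rpow, hv.contDiffOn_rpow,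
    hu.derivWithin_rpow_zero, hv.derivWithin_rpow_zero, fun r hr => ⟨?_, ?_⟩⟩
  · have h2 : (s ^ 3) ^ ((2:ℝ) / 3) = s ^ 2 := by exact_mod_cast cube_rpow_div_three hs.le 2
    rw [hu.laplacian r hr, h2]
    field_simp
    linear_combination (-v r) * hroot
  · rw [hv.laplacian r hr]; ring
end
end
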